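/- arXiv:1202.2325 — 9 statements merged into one kernel-verified Lean document; each statement's English description precedes it below -/
import Mathlib

section
/- (Proposition 3.2: the character χ^{(2n-1,1)} occurs with multiplicity 1 in Ind_C^{S_{2n}} 1_C.) Let n ≥ 2, let σ ∈ Equiv.Perm (Fin (2*n)) be the n-cycle with σ(i) = i+1 mod n for i < n and σ(i) = i for i ≥ n, and let C = Subgroup.centralizer {σ}. Then Σ_{τ ∈ C} (number of fixed points of τ in Fin (2*n)) = 2 · n · n!. -/
/-! By Burnside's lemma, the fixed points of the elements of a finite permutation group add up to
the group order times the number of orbits. A permutation commuting with a cycle `g` preserves the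
support of `g`; conversely the powers of `g` act transitively on its support and the
transpositions of two fixed points of `g` commute with `g`. So when `g` also has a fixed point,
its centralizer has exactly two orbits. For the `n`-cycle in `S_{2n}`, the centralizer is the
product of the `n` powers of the cycle with the `n!` permutations of its fixed points. -/

open Finset MulAction

namespace Equiv.Perm

variable {α : Type*} [Fintype α] [DecidableEq α] {g : Perm α}

theorem IsCycle.orbitRel_centralizer_iff (hg : g.IsCycle) (x y : α) :
    orbitRel (Subgroup.centralizer {g}) α x y ↔ (x ∈ g.support ↔ y ∈ g.support) := by
  rw [orbitRel_apply, mem_orbit_iff]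
  constructor
  · rintro ⟨⟨c, hc⟩, rfl⟩
    exact mem_support_iff_of_commute (Subgroup.mem_centralizer_singleton_iff.mp hc) y
  · intro hxy
    by_cases hy : y ∈ g.support
    · obtain ⟨i, hi⟩ := hg.exists_zpow_eq (mem_support.mp hy) (mem_support.mp (hxy.mpr hy))
      exact ⟨⟨g ^ i, Subgroup.mem_centralizer_singleton_iff.mpr (Commute.zpow_self g i).eq⟩, hi⟩
    · have hx : g x = x := notMem_support.mp (hxy.not.mpr hy)
      refine ⟨⟨swap x y, Subgroup.mem_centralizer_singleton_iff.mpr ?_⟩, swap_apply_right x y⟩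
      rw [mul_swap_eq_swap_mul, hx, notMem_support.mp hy]

theorem IsCycle.nat_card_orbitRel_centralizer (hg : g.IsCycle) (hfix : g.support ≠ univ) :
    Nat.card (orbitRel.Quotient (Subgroup.centralizer {g}) α) = 2 := by
  have hsurj : Function.Surjective (· ∈ g.support) := by
    intro P
    by_cases hP : P
    · obtain ⟨x, hx⟩ := hg.nonempty_support
      exact ⟨x, propext ⟨fun _ => hP, fun _ => hx⟩⟩
    · obtain ⟨x, -, hx⟩ := exists_of_ssubset (ssubset_univ_iff.mpr hfix)
      exact ⟨x, propext ⟨fun h => absurd h hx, fun h => absurd h hP⟩⟩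
  let e := Quotient.congrRight (r' := Setoid.ker (· ∈ g.support)) fun x y =>
    (hg.orbitRel_centralizer_iff x y).trans (eq_iff_iff (a := x ∈ g.support)).symm
  rw [Nat.card_congr (e.trans (Setoid.quotientKerEquivOfSurjective _ hsurj)),
    Nat.card_eq_fintype_card, Fintype.card_prop]

theorem IsCycle.sum_card_fixedPoints_centralizer [Fintype (Subgroup.centralizer {g})]
    (hg : g.IsCycle) (hfix : g.support ≠ univ) :
    ∑ τ : Subgroup.centralizer {g}, #{x | (τ : Perm α) x = x} =
      2 * Nat.card (Subgroup.centralizer {g}) := by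
  classical
  have burnside := sum_card_fixedBy_eq_card_orbits_mul_card_group (Subgroup.centralizer {g}) α
  rw [← Nat.card_eq_fintype_card, ← Nat.card_eq_fintype_card,
    hg.nat_card_orbitRel_centralizer hfix] at burnside
  convert burnside using 2 with τ
  rw [← Fintype.card_subtype]
  exact Fintype.card_congr (Equiv.subtypeEquivRight fun x => Iff.rfl)

theorem IsCycle.nat_card_centralizer (hg : g.IsCycle) :
    Nat.card (Subgroup.centralizer {g}) =
      (Fintype.card α - #g.support).factorial * #g.support := by
  rw [Equiv.Perm.nat_card_centralizer, hg.cycleType]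
  simp

theorem eq_extendDomain_finRotate {n m : ℕ} (h : n ≤ m) (σ : Perm (Fin m))
    (hσ : ∀ i : Fin m, (σ i : ℕ) = if (i : ℕ) < n then ((i : ℕ) + 1) % n else i) :
    σ = (finRotate n).extendDomain (Fin.castLEquiv h) := by
  ext i
  by_cases hi : (i : ℕ) < n
  · rw [extendDomain_apply_subtype _ (Fin.castLEquiv h) (b := i) hi, hσ, if_pos hi]
    simp [Fin.val_add]
  · rw [extendDomain_apply_not_subtype _ (Fin.castLEquiv h) (b := i) hi, hσ, if_neg hi]

end Equiv.Perm

open scoped Classical in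
/-- Proposition 3.2: `χ^{(2n-1,1)}` occurs with multiplicity 1 in `Ind_C^{S_{2n}} 1_C`,
expressed as: the total number of fixed points of elements of `C` is `2 ⬝ n ⬝ n!`. -/
theorem fixed_points_sum (n : ℕ) (hn : 2 ≤ n) (σ : Equiv.Perm (Fin (2 * n)))
    (hσ : ∀ i : Fin (2 * n),
      ((σ i : ℕ) = if (i : ℕ) < n then ((i : ℕ) + 1) % n else (i : ℕ))) :
    ∑ τ : Subgroup.centralizer {σ},
      (Finset.univ.filter
        (fun i : Fin (2 * n) => (τ : Equiv.Perm (Fin (2 * n))) i = i)).card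
      = 2 * n * n.factorial := by
  have hσ' := Equiv.Perm.eq_extendDomain_finRotate (by omega) σ hσ
  have hcycle : σ.IsCycle := hσ' ▸ (isCycle_finRotate_of_le hn).extendDomain _
  have hcard : #σ.support = n := by
    rw [hσ', Equiv.Perm.card_support_extend_domain, support_finRotate_of_le hn, card_univ,
      Fintype.card_fin]
  have hfix : σ.support ≠ univ := fun h => by
    rw [h, card_univ, Fintype.card_fin] at hcard
    omega
  rw [hcycle.sum_card_fixedPoints_centralizer hfix, hcycle.nat_card_centralizer, hcard,
    Fintype.card_fin, show 2 * n - n = n by omega]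
  ring
end

section
/- (Proposition 3.3: the character χ^{(n,n)} occurs with multiplicity 1 in Ind_C^{S_{2n}} 1_C.) Let n ≥ 2, let σ ∈ Equiv.Perm (Fin (2*n)) be the n-cycle with σ(i) = i+1 mod n for i < n and σ(i) = i for i ≥ n, and let C = Subgroup.centralizer {σ}. Then Σ_{τ ∈ C} (F n τ − F (n−1) τ) = n · n!. -/
/-- `F k τ` is the number of `k`-element subsets of `Fin m` invariant under `τ`. -/
def F {m : ℕ} (k : ℕ) (τ : Equiv.Perm (Fin m)) : ℕ :=
  ((Finset.univ : Finset (Finset (Fin m))).filter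
    (fun s => s.card = k ∧ s.image τ = s)).card

/-! Identify `Fin (2n)` with `Fin n ⊕ Fin n`, so that `σ` becomes `(· + 1) ⊕ 1`. As `· + 1` has no
fixed points, its centralizer consists of the `(· + c) ⊕ π`, and is `ℤ/n × S_n`. An invariant set
of `ρ ⊕ π` is a pair of invariant sets, and by Burnside's lemma (`S_n` acts transitively on
`j`-sets) `∑_π F j π = n!` for `j ≤ n`. Hence `∑_{τ ∈ C} F k τ = n! ∑_c ∑_{i ≤ k} F i (· + c)`,
and in the difference of the cases `k = n` and `k = n - 1` only the `n` terms
`F n (· + c) = 1` survive. -/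

open Finset MulAction Subgroup

def MulEquiv.centralizerSingletonCongr {G H : Type*} [Group G] [Group H] (f : G ≃* H) (g : G) :
    centralizer {g} ≃ centralizer {f g} :=
  f.toEquiv.subtypeEquiv fun x => by
    simp [mem_centralizer_singleton_iff, ← map_mul, f.injective.eq_iff]

@[simp]
theorem MulEquiv.coe_centralizerSingletonCongr_apply {G H : Type*} [Group G] [Group H]
    (f : G ≃* H) (g : G) (x : centralizer {g}) :
    (f.centralizerSingletonCongr g x : H) = f x :=
  rfl

namespace Equiv.Perm

variable {α β : Type*} {a : Perm α}

section Centralizer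

theorem sumCongr_inj {ρ ρ' : Perm α} {π π' : Perm β} :
    sumCongr ρ π = sumCongr ρ' π' ↔ ρ = ρ' ∧ π = π' :=
  (sumCongrHom_injective.eq_iff (a := (ρ, π)) (b := (ρ', π'))).trans Prod.ext_iff

theorem mapsTo_range_inr_of_mem_centralizer (ha : ∀ x, a x ≠ x) {τ : Perm (α ⊕ β)}
    (hτ : τ ∈ centralizer {sumCongr a (1 : Perm β)}) :
    Set.MapsTo τ (Set.range Sum.inr) (Set.range Sum.inr) := by
  -- `τ` permutes the fixed points of `a ⊕ 1`, which are exactly the `Sum.inr y`.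
  rintro _ ⟨y, rfl⟩
  have hfix := DFunLike.congr_fun (mem_centralizer_singleton_iff.mp hτ) (Sum.inr y)
  simp only [coe_mul, Function.comp_apply, sumCongr_apply, Sum.map_inr, coe_one, id_eq] at hfix
  rcases hτy : τ (Sum.inr y) with x | y'
  · rw [hτy] at hfix
    exact absurd (Sum.inl_injective hfix).symm (ha x)
  · exact ⟨y', rfl⟩

theorem sumCongr_mem_centralizer_sumCongr_one {ρ : Perm α} (hρ : ρ ∈ centralizer {a})
    (π : Perm β) : sumCongr ρ π ∈ centralizer {sumCongr a 1} := by
  rw [mem_centralizer_singleton_iff] at hρ ⊢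
  rw [sumCongr_mul, sumCongr_mul, hρ, mul_one, one_mul]

variable [Finite α] [Finite β] in
theorem bijective_centralizer_sumCongr_one (ha : ∀ x, a x ≠ x) :
    Function.Bijective fun p : centralizer {a} × Perm β =>
      (⟨sumCongr p.1 p.2, sumCongr_mem_centralizer_sumCongr_one p.1.2 p.2⟩ :
        centralizer {sumCongr a (1 : Perm β)}) := by
  refine ⟨fun p q hpq => ?_, fun ⟨τ, hτ⟩ => ?_⟩
  · obtain ⟨hρ, hπ⟩ := sumCongr_inj.mp (congrArg Subtype.val hpq)
    exact Prod.ext (Subtype.ext hρ) hπ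
  · obtain ⟨⟨ρ, π⟩, rfl⟩ := mem_sumCongrHom_range_of_perm_mapsTo_inl
      ((perm_mapsTo_inl_iff_mapsTo_inr _).mpr (mapsTo_range_inr_of_mem_centralizer ha hτ))
    have hcomm := mem_centralizer_singleton_iff.mp hτ
    simp only [sumCongrHom_apply, sumCongr_mul, mul_one, one_mul] at hcomm
    have hρ : ρ ∈ centralizer {a} :=
      mem_centralizer_singleton_iff.mpr (sumCongr_inj.mp hcomm).1
    exact ⟨(⟨ρ, hρ⟩, π), rfl⟩

end Centralizer

section InvariantFinsets

variable [DecidableEq α] [DecidableEq β]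

theorem image_sumCongr_disjSum (ρ : Perm α) (π : Perm β) (u : Finset α) (v : Finset β) :
    (u.disjSum v).image (sumCongr ρ π) = (u.image ρ).disjSum (v.image π) := by
  ext (x | x) <;> simp

theorem image_sumCongr_eq_self_iff (ρ : Perm α) (π : Perm β) (s : Finset (α ⊕ β)) :
    s.image (sumCongr ρ π) = s ↔ s.toLeft.image ρ = s.toLeft ∧ s.toRight.image π = s.toRight := by
  rw [← disjSum_inj, ← image_sumCongr_disjSum, s.toLeft_disjSum_toRight]

variable [Fintype α] [Fintype β]

def numInvariantFinsets (k : ℕ) (τ : Perm α) : ℕ :=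
  #{s : Finset α | s.card = k ∧ s.image τ = s}

open scoped Pointwise in
theorem card_fixedBy_powersetCard (k : ℕ) (τ : Perm α)
    [Fintype (fixedBy (Set.powersetCard α k) τ)] :
    Fintype.card (fixedBy (Set.powersetCard α k) τ) = numInvariantFinsets k τ := by
  rw [numInvariantFinsets, ← Fintype.card_subtype]
  refine Fintype.card_congr ((Equiv.subtypeSubtypeEquivSubtypeExists _ _).trans
    (Equiv.subtypeEquivRight fun s => ?_))
  simp [mem_fixedBy, ← Subtype.coe_inj, Finset.smul_finset_def, Perm.smul_def]

theorem sum_numInvariantFinsets (k : ℕ) (hk : k ≤ Fintype.card α) :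
    ∑ τ : Perm α, numInvariantFinsets k τ = (Fintype.card α).factorial := by
  classical
  obtain ⟨s, -, hs⟩ := Finset.exists_subset_card_eq hk
  have : Subsingleton (orbitRel.Quotient (Perm α) (Set.powersetCard α k)) :=
    (pretransitive_iff_subsingleton_quotient _ _).mp Set.powersetCard.isPretransitive
  have horbits : Fintype.card (orbitRel.Quotient (Perm α) (Set.powersetCard α k)) = 1 :=
    Fintype.card_eq_one_iff.mpr ⟨⟦⟨s, by simpa using hs⟩⟧, fun _ => Subsingleton.elim _ _⟩
  have := sum_card_fixedBy_eq_card_orbits_mul_card_group (Perm α) (Set.powersetCard α k)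
  simp_rw [card_fixedBy_powersetCard, horbits, Fintype.card_perm, one_mul] at this
  exact this

theorem numInvariantFinsets_card (τ : Perm α) :
    numInvariantFinsets (Fintype.card α) τ = 1 := by
  rw [numInvariantFinsets, card_eq_one]
  refine ⟨univ, eq_singleton_iff_unique_mem.mpr ⟨?_, fun s hs => ?_⟩⟩
  · simp [image_univ_of_surjective τ.surjective]
  · exact eq_univ_of_card s (mem_filter.mp hs).2.1

theorem numInvariantFinsets_permCongr (e : α ≃ β) (τ : Perm α) (k : ℕ) :
    numInvariantFinsets k (e.permCongr τ) = numInvariantFinsets k τ := by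
  refine (card_equiv e.finsetCongr fun s => ?_).symm
  have himage : (s.map e.toEmbedding).image (e.permCongr τ) = (s.image τ).map e.toEmbedding := by
    simp [map_eq_image, image_image, Function.comp_def]
  simp only [mem_filter, mem_univ, true_and, Equiv.finsetCongr_apply, card_map, himage,
    map_inj]

theorem numInvariantFinsets_sumCongr (ρ : Perm α) (π : Perm β) (k : ℕ) :
    numInvariantFinsets k (sumCongr ρ π) =
      ∑ ij ∈ antidiagonal k, numInvariantFinsets ij.1 ρ * numInvariantFinsets ij.2 π := by
  let Inv (p : Finset α × Finset β) : Prop := p.1.image ρ = p.1 ∧ p.2.image π = p.2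
  calc numInvariantFinsets k (sumCongr ρ π)
      = #{p : Finset α × Finset β | (p.1.card, p.2.card) ∈ antidiagonal k ∧ Inv p} := by
        apply card_nbij' (fun s => (s.toLeft, s.toRight)) (fun p => p.1.disjSum p.2)
        · intro s
          simp [Inv, image_sumCongr_eq_self_iff, card_toLeft_add_card_toRight]
        · intro p
          simp [Inv, image_sumCongr_disjSum]
        · intro s _
          exact s.toLeft_disjSum_toRight
        · intro p _
          simp
    _ = ∑ ij ∈ antidiagonal k,
          #{p : Finset α × Finset β | (p.1.card, p.2.card) = ij ∧ Inv p} := by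
        rw [card_eq_sum_card_fiberwise (f := fun p => (p.1.card, p.2.card)) (t := antidiagonal k)]
        · refine sum_congr rfl fun ij hij => congrArg card ?_
          rw [filter_filter]
          refine filter_congr fun p _ => ⟨?_, ?_⟩
          · rintro ⟨⟨-, hp⟩, rfl⟩
            exact ⟨rfl, hp⟩
          · rintro ⟨hp', hp⟩
            exact ⟨⟨hp' ▸ hij, hp⟩, hp'⟩
        · intro p hp
          exact (mem_filter.1 hp).2.1
    _ = _ := by
        refine sum_congr rfl fun ij _ => ?_
        rw [numInvariantFinsets, numInvariantFinsets, ← card_product, ← filter_product,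
          univ_product_univ]
        congr 1
        ext p
        simp only [mem_filter, mem_univ, true_and, Prod.ext_iff, Inv]
        tauto

open scoped Classical in
theorem sum_centralizer_sumCongr_one_numInvariantFinsets (ha : ∀ x, a x ≠ x) {k : ℕ}
    (hk : k ≤ Fintype.card β) :
    ∑ τ : centralizer {sumCongr a (1 : Perm β)}, numInvariantFinsets k (τ : Perm (α ⊕ β)) =
      (Fintype.card β).factorial *
        ∑ ρ : centralizer {a}, ∑ i ∈ range (k + 1), numInvariantFinsets i (ρ : Perm α) := by
  rw [← Fintype.sum_bijective _ (bijective_centralizer_sumCongr_one ha)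
    (fun p => numInvariantFinsets k (sumCongr (p.1 : Perm α) p.2)) _ fun _ => rfl,
    Fintype.sum_prod_type, mul_sum]
  refine sum_congr rfl fun ρ _ => ?_
  have hπ : ∀ ij ∈ antidiagonal k,
      ∑ π : Perm β, numInvariantFinsets ij.2 π = (Fintype.card β).factorial := fun ij hij =>
    sum_numInvariantFinsets _ (by have := mem_antidiagonal.mp hij; omega)
  simp_rw [numInvariantFinsets_sumCongr]
  rw [sum_comm, sum_congr rfl fun ij hij => by rw [← mul_sum, hπ ij hij],
    Nat.sum_antidiagonal_eq_sum_range_succ_mk, ← sum_mul, mul_comm]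

open scoped Classical in
theorem sum_centralizer_sumCongr_one_numInvariantFinsets_sub (ha : ∀ x, a x ≠ x) [Nonempty α]
    (h : Fintype.card α ≤ Fintype.card β) :
    ∑ τ : centralizer {sumCongr a (1 : Perm β)},
        ((numInvariantFinsets (Fintype.card α) (τ : Perm (α ⊕ β)) : ℤ) -
          numInvariantFinsets (Fintype.card α - 1) (τ : Perm (α ⊕ β))) =
      (Fintype.card β).factorial * Nat.card (centralizer {a}) := by
  obtain ⟨m, hm⟩ : ∃ m, Fintype.card α = m + 1 :=
    ⟨Fintype.card α - 1, (Nat.sub_add_cancel Fintype.card_pos).symm⟩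
  rw [sum_sub_distrib, ← Nat.cast_sum, ← Nat.cast_sum,
    sum_centralizer_sumCongr_one_numInvariantFinsets ha h,
    sum_centralizer_sumCongr_one_numInvariantFinsets ha ((Nat.sub_le _ _).trans h)]
  simp_rw [hm, Nat.add_sub_cancel, sum_range_succ _ (m + 1), sum_add_distrib, ← hm,
    numInvariantFinsets_card, sum_const, card_univ, smul_eq_mul, mul_one, Nat.card_eq_fintype_card]
  push_cast
  ring

end InvariantFinsets

end Equiv.Perm

open Equiv.Perm

theorem F_eq_numInvariantFinsets {m k : ℕ} (τ : Equiv.Perm (Fin m)) :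
    F k τ = numInvariantFinsets k τ := rfl

namespace Fin

variable {n : ℕ} [NeZero n]

open Fin.NatCast in
theorem eq_addRight_of_mem_centralizer {ρ : Equiv.Perm (Fin n)}
    (hρ : ρ ∈ centralizer {Equiv.addRight (1 : Fin n)}) : ρ = Equiv.addRight (ρ 0) := by
  have hstep (x : Fin n) : ρ (x + 1) = ρ x + 1 :=
    DFunLike.congr_fun (mem_centralizer_singleton_iff.mp hρ) x
  refine Equiv.ext fun x => ?_
  obtain ⟨k, rfl⟩ : ∃ k : ℕ, (k : Fin n) = x := ⟨x, Fin.cast_val_eq_self x⟩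
  induction k with
  | zero => simp
  | succ k ih => simp only [Nat.cast_succ, hstep, ih, Equiv.coe_addRight, add_right_comm]

theorem nat_card_centralizer_addRight_one :
    Nat.card (centralizer {Equiv.addRight (1 : Fin n)}) = n := by
  have hmem (c : Fin n) : Equiv.addRight c ∈ centralizer {Equiv.addRight (1 : Fin n)} := by
    rw [mem_centralizer_singleton_iff]
    ext x
    simp [add_right_comm]
  have hbij : Function.Bijective fun c : Fin n => (⟨Equiv.addRight c, hmem c⟩ : centralizer _) := by
    refine ⟨fun c d hcd => ?_, fun ⟨ρ, hρ⟩ =>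
      ⟨ρ 0, Subtype.ext (eq_addRight_of_mem_centralizer hρ).symm⟩⟩
    simpa using DFunLike.congr_fun (congrArg Subtype.val hcd) 0
  rw [← Nat.card_congr (Equiv.ofBijective _ hbij), Nat.card_eq_fintype_card, Fintype.card_fin]

end Fin

open scoped Classical in
/-- Proposition 3.3: `χ^{(n,n)}` occurs with multiplicity 1 in `Ind_C^{S_{2n}} 1_C`:
`Σ_{τ ∈ C} χ^{(n,n)}(τ) = Σ_{τ ∈ C} (F n τ - F (n-1) τ) = n ⬝ n!`. -/
theorem chi_nn_multiplicity_one (n : ℕ) (hn : 2 ≤ n) (σ : Equiv.Perm (Fin (2 * n)))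
    (hσ : ∀ i : Fin (2 * n),
      ((σ i : ℕ) = if (i : ℕ) < n then ((i : ℕ) + 1) % n else (i : ℕ))) :
    ∑ τ : Subgroup.centralizer {σ},
      ((F n (τ : Equiv.Perm (Fin (2 * n))) : ℤ)
        - (F (n - 1) (τ : Equiv.Perm (Fin (2 * n))) : ℤ))
      = (n : ℤ) * n.factorial := by
  have : NeZero n := ⟨by omega⟩
  let e : Fin n ⊕ Fin n ≃ Fin (2 * n) := finSumFinEquiv.trans (finCongr (two_mul n).symm)
  have hσ_sumCongr : σ = e.permCongrHom (Equiv.Perm.sumCongr (Equiv.addRight 1) 1) := by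
    ext x
    obtain ⟨y, rfl⟩ := e.surjective x
    rw [Equiv.permCongrHom_coe, Equiv.permCongr_apply, Equiv.symm_apply_apply, hσ]
    rcases y with i | i
    · simp [e, Fin.val_add]
    · simp [e]
  subst hσ_sumCongr
  have hF (k : ℕ) (τ : Equiv.Perm (Fin n ⊕ Fin n)) :
      F k (e.permCongrHom τ) = numInvariantFinsets k τ := by
    rw [Equiv.permCongrHom_coe, F_eq_numInvariantFinsets, numInvariantFinsets_permCongr]
  rw [← Fintype.sum_equiv (e.permCongrHom.centralizerSingletonCongr _)
    (fun τ => (numInvariantFinsets n (τ : Equiv.Perm (Fin n ⊕ Fin n)) : ℤ) -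
      numInvariantFinsets (n - 1) (τ : Equiv.Perm (Fin n ⊕ Fin n)))
    (fun τ => (F n (τ : Equiv.Perm (Fin (2 * n))) : ℤ) - F (n - 1) (τ : Equiv.Perm (Fin (2 * n))))
    fun τ => by rw [MulEquiv.coe_centralizerSingletonCongr_apply, hF, hF]]
  have hfree (x : Fin n) : Equiv.addRight 1 x ≠ x := by simp; omega
  have := sum_centralizer_sumCongr_one_numInvariantFinsets_sub (β := Fin n) hfree le_rfl
  rw [Fintype.card_fin, Fin.nat_card_centralizer_addRight_one] at this
  rw [this, mul_comm]
end

section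
/- (Theorem 3.5: multiplicity of χ^{(2n-k,k)} in Ind_C^{S_{2n}} 1_C.) Let k ≥ 1 and n ≥ 2k. Let σ ∈ Equiv.Perm (Fin (2*n)) be the n-cycle with σ(i) = i+1 mod n for i < n and σ(i) = i for i ≥ n, and let C = Subgroup.centralizer {σ}. For 1 < h < n write d_h = gcd(n,h). Then Σ_{τ ∈ C} (F k τ − F (k−1) τ) = n! · ( C(n,k) + Σ_{1<h<n, d_h ≠ 1, (n/d_h) ∣ k} C(d_h, k·d_h/n) ), where C(a,b) denotes the binomial coefficient; equivalently, the multiplicity of χ^{(2n−k,k)} in Ind_C^{S_{2n}} 1_C equals (1/n)·( C(n,k) + Σ_{1<h<n, d_h ≠ 1, (n/d_h) ∣ k} C(d_h, k·d_h/n) ). -/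
open Finset Equiv MulAction

def numInvariantSubsets {α : Type*} [Fintype α] [DecidableEq α] (k : ℕ) (g : Perm α) : ℕ :=
  #{s : Finset α | s.card = k ∧ s.image g = s}

theorem F_eq_numInvariantSubsets {m : ℕ} (k : ℕ) (τ : Perm (Fin m)) :
    F k τ = numInvariantSubsets k τ :=
  rfl

section InvariantSubsets

variable {α β : Type*} [DecidableEq α] [DecidableEq β]

theorem image_permCongr_eq_self_iff (e : α ≃ β) (g : Perm α) (s : Finset α) :
    (s.image e).image (e.permCongr g) = s.image e ↔ s.image g = s := by
  rw [image_image, ← (image_injective e.injective).eq_iff, image_image]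
  simp [Function.comp_def]

theorem image_sumCongr_eq_self_iff (g : Perm α) (h : Perm β) (u : Finset (α ⊕ β)) :
    u.image (sumCongr g h) = u ↔
      u.toLeft.image g = u.toLeft ∧ u.toRight.image h = u.toRight := by
  have toLeft_image : (u.image (sumCongr g h)).toLeft = u.toLeft.image g := by ext; simp
  have toRight_image : (u.image (sumCongr g h)).toRight = u.toRight.image h := by ext; simp
  rw [← sumEquiv.injective.eq_iff, Prod.ext_iff]
  simp [toLeft_image, toRight_image]

variable [Fintype α] [Fintype β]

theorem numInvariantSubsets_permCongr (e : α ≃ β) (k : ℕ) (g : Perm α) :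
    numInvariantSubsets k (e.permCongr g) = numInvariantSubsets k g :=
  (card_equiv e.finsetCongr fun s => by
    simp [map_eq_image, card_image_of_injective _ e.injective,
      image_permCongr_eq_self_iff]).symm

theorem numInvariantSubsets_sumCongr (g : Perm α) (h : Perm β) (k : ℕ) :
    numInvariantSubsets k (sumCongr g h) =
      ∑ a ∈ range (k + 1), numInvariantSubsets a g * numInvariantSubsets (k - a) h := by
  let P : Finset (Finset α × Finset β) :=
    {p | p.1.card + p.2.card = k ∧ p.1.image g = p.1 ∧ p.2.image h = p.2}
  have hP : numInvariantSubsets k (sumCongr g h) = #P := by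
    refine card_equiv sumEquiv.toEquiv fun u => ?_
    simp [P, image_sumCongr_eq_self_iff, card_toLeft_add_card_toRight]
  rw [hP, card_eq_sum_card_fiberwise (f := fun p => p.1.card) (t := range (k + 1))]
  · refine sum_congr rfl fun a ha => ?_
    rw [numInvariantSubsets, numInvariantSubsets, ← card_product]
    congr 1
    ext p
    simp only [P, mem_filter, mem_univ, true_and, mem_product, mem_range] at ha ⊢
    constructor
    · rintro ⟨⟨hk, hg, hh⟩, rfl⟩
      exact ⟨⟨rfl, hg⟩, by omega, hh⟩
    · rintro ⟨⟨rfl, hg⟩, hk, hh⟩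
      exact ⟨⟨by omega, hg, hh⟩, rfl⟩
  · intro p hp
    simp only [P, coe_filter, mem_univ, true_and, Set.mem_ofPred_eq] at hp
    simp only [coe_range, Set.mem_Iio]
    omega

open scoped Pointwise in
theorem numInvariantSubsets_eq_card_fixedBy (k : ℕ) (g : Perm α) :
    numInvariantSubsets k g = Fintype.card (fixedBy (Set.powersetCard α k) g) := by
  rw [numInvariantSubsets, ← Fintype.card_subtype]
  refine Fintype.card_congr <| (Equiv.subtypeSubtypeEquivSubtypeInter
    (· ∈ Set.powersetCard α k) (fun s => s.image g = s)).symm.trans <|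
    Equiv.subtypeEquivRight fun s => ?_
  simp [mem_fixedBy, Subtype.ext_iff, Finset.smul_finset_def, Perm.smul_def]

theorem sum_numInvariantSubsets {k : ℕ} (hk : k ≤ Fintype.card α) :
    ∑ g : Perm α, numInvariantSubsets k g = (Fintype.card α).factorial := by
  classical
  obtain ⟨s, -, hs⟩ := exists_subset_card_eq (s := (univ : Finset α)) (by simpa using hk)
  have : Nonempty (Set.powersetCard α k) := ⟨⟨s, hs⟩⟩
  obtain ⟨_⟩ := (pretransitive_iff_unique_quotient_of_nonempty (Perm α)
    (Set.powersetCard α k)).mp Set.powersetCard.isPretransitive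
  simp_rw [numInvariantSubsets_eq_card_fixedBy]
  rw [sum_card_fixedBy_eq_card_orbits_mul_card_group, Fintype.card_perm, Fintype.card_unique,
    one_mul]

theorem sum_numInvariantSubsets_sumCongr (g : Perm α) {k : ℕ} (hk : k ≤ Fintype.card β) :
    ∑ h : Perm β, numInvariantSubsets k (sumCongr g h) =
      (Fintype.card β).factorial * ∑ a ∈ range (k + 1), numInvariantSubsets a g := by
  simp_rw [numInvariantSubsets_sumCongr]
  rw [sum_comm, mul_sum]
  refine sum_congr rfl fun a ha => ?_
  rw [← mul_sum, sum_numInvariantSubsets (by omega), mul_comm]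

theorem sum_numInvariantSubsets_sumCongr_sub (g : Perm α) {k : ℕ} (hk : 1 ≤ k)
    (hkβ : k ≤ Fintype.card β) :
    ∑ h : Perm β, ((numInvariantSubsets k (sumCongr g h) : ℤ) -
        numInvariantSubsets (k - 1) (sumCongr g h)) =
      (Fintype.card β).factorial * numInvariantSubsets k g := by
  obtain ⟨k, rfl⟩ := Nat.exists_eq_add_of_le' hk
  rw [sum_sub_distrib, ← Nat.cast_sum, ← Nat.cast_sum, Nat.add_sub_cancel,
    sum_numInvariantSubsets_sumCongr _ hkβ, sum_numInvariantSubsets_sumCongr _ (by omega),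
    sum_range_succ]
  push_cast
  ring

end InvariantSubsets

theorem card_finsets_card_mul_eq {α : Type*} [Fintype α] {m : ℕ} (hm : 0 < m) (k : ℕ) :
    #{t : Finset α | t.card * m = k} = if m ∣ k then (Fintype.card α).choose (k / m) else 0 := by
  split_ifs with hdvd
  · obtain ⟨c, rfl⟩ := hdvd
    rw [Nat.mul_div_cancel_left _ hm, ← card_univ, ← card_powersetCard, powersetCard_eq_filter]
    congr 1
    ext t
    simp [mul_comm m, Nat.mul_left_inj hm.ne']
  · rw [card_eq_zero, filter_eq_empty_iff]
    exact fun t _ ht => hdvd ⟨t.card, by rw [← ht, mul_comm]⟩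

section Translations

variable {G : Type*} [AddGroup G]

theorem card_preimage_mk (H : AddSubgroup G) (t : Finset (G ⧸ H)) :
    Nat.card (QuotientAddGroup.mk ⁻¹' (t : Set (G ⧸ H))) = t.card * Nat.card H := by
  rw [Nat.card_congr (QuotientAddGroup.preimageMkEquivAddSubgroupProdSet H t), Nat.card_prod,
    Nat.card_coe_set_eq, Set.ncard_coe_finset, mul_comm]

variable [DecidableEq G]

theorem image_addRight_eq_self_iff (j : G) (s : Finset G) :
    s.image (Equiv.addRight j) = s ↔ ∀ x ∈ s, ∀ h ∈ AddSubgroup.zmultiples j, x + h ∈ s := by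
  refine ⟨fun hs x hx h hh => ?_, fun hs => ?_⟩
  · obtain ⟨m, rfl⟩ := AddSubgroup.mem_zmultiples_iff.1 hh
    have add_mem (y) (hy : y ∈ s) : y + j ∈ s := hs ▸ mem_image_of_mem _ hy
    have sub_mem (y) (hy : y ∈ s) : y - j ∈ s := by
      rw [← hs] at hy
      obtain ⟨z, hz, rfl⟩ := mem_image.1 hy
      simpa using hz
    clear hh
    induction m using Int.induction_on with
    | zero => simpa using hx
    | succ m ih => rw [add_zsmul, one_zsmul, ← add_assoc]; exact add_mem _ ih
    | pred m ih => rw [sub_zsmul, one_zsmul, ← add_assoc, ← sub_eq_add_neg]; exact sub_mem _ ih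
  · refine eq_of_subset_of_card_le (fun y hy => ?_)
      (card_image_of_injective _ (Equiv.injective _)).ge
    obtain ⟨x, hx, rfl⟩ := mem_image.1 hy
    exact hs x hx j (AddSubgroup.mem_zmultiples j)

variable [Fintype G]

theorem card_addSubgroup_invariant_finsets (H : AddSubgroup G) [DecidablePred (· ∈ H)] (k : ℕ) :
    #{s : Finset G | s.card = k ∧ ∀ x ∈ s, ∀ h ∈ H, x + h ∈ s} =
      if Nat.card H ∣ k then (Nat.card (G ⧸ H)).choose (k / Nat.card H) else 0 := by
  classical
  let pre (t : Finset (G ⧸ H)) : Finset G := {x | (x : G ⧸ H) ∈ t}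
  have card_pre (t : Finset (G ⧸ H)) : (pre t).card = t.card * Nat.card H := by
    rw [← card_preimage_mk, Nat.card_eq_fintype_card, Fintype.card_subtype]
    simp [pre]
  have pre_image {s : Finset G} (hs : ∀ x ∈ s, ∀ h ∈ H, x + h ∈ s) : pre (s.image (↑)) = s := by
    ext y
    simp only [pre, mem_filter, mem_univ, true_and, mem_image]
    refine ⟨fun ⟨x, hx, hxy⟩ => ?_, fun hy => ⟨y, hy, rfl⟩⟩
    simpa using hs x hx _ (QuotientAddGroup.eq.1 hxy)
  have image_pre (t : Finset (G ⧸ H)) : (pre t).image (↑) = t := by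
    ext q
    obtain ⟨x, rfl⟩ := QuotientAddGroup.mk_surjective q
    simp only [pre, mem_image, mem_filter, mem_univ, true_and]
    exact ⟨fun ⟨y, hy, hyx⟩ => hyx ▸ hy, fun hx => ⟨x, hx, rfl⟩⟩
  rw [Nat.card_eq_fintype_card (α := G ⧸ H), ← card_finsets_card_mul_eq Nat.card_pos]
  refine card_nbij' (·.image (↑)) pre ?_ ?_ (fun s hs => pre_image (mem_filter.1 hs).2.2)
    (fun t _ => image_pre t)
  · intro s hs
    simp only [coe_filter, mem_univ, true_and, Set.mem_ofPred_eq] at hs ⊢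
    rw [← card_pre, pre_image hs.2, hs.1]
  · intro t ht
    simp only [coe_filter, mem_univ, true_and, Set.mem_ofPred_eq] at ht ⊢
    refine ⟨card_pre t ▸ ht, fun x hx h hh => ?_⟩
    simpa [pre, QuotientAddGroup.mk_add_of_mem x hh] using hx

theorem numInvariantSubsets_addRight (j : G) (k : ℕ) :
    numInvariantSubsets k (Equiv.addRight j) =
      if addOrderOf j ∣ k then (Fintype.card G / addOrderOf j).choose (k / addOrderOf j)
      else 0 := by
  classical
  rw [numInvariantSubsets]
  simp_rw [image_addRight_eq_self_iff]
  rw [card_addSubgroup_invariant_finsets, Nat.card_zmultiples, ← Nat.card_eq_fintype_card,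
    AddSubgroup.card_eq_card_quotient_mul_card_addSubgroup (AddSubgroup.zmultiples j),
    Nat.card_zmultiples, Nat.mul_div_cancel _ (addOrderOf_pos j)]

end Translations

theorem numInvariantSubsets_addRight_natCast {n : ℕ} [NeZero n] (k h : ℕ) :
    numInvariantSubsets k (Equiv.addRight (h : ZMod n)) =
      if n / n.gcd h ∣ k then (n.gcd h).choose (k * n.gcd h / n) else 0 := by
  have hd : n.gcd h ∣ n := Nat.gcd_dvd_left n h
  have hpos : 0 < n.gcd h := Nat.gcd_pos_of_pos_left h (NeZero.pos n)
  have hdiv : k / (n / n.gcd h) = k * n.gcd h / n := by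
    obtain ⟨c, hc⟩ := hd
    generalize n.gcd h = d at hc hpos ⊢
    subst hc
    rw [Nat.mul_div_cancel_left _ hpos, mul_comm k, Nat.mul_div_mul_left _ _ hpos]
  rw [numInvariantSubsets_addRight, ZMod.addOrderOf_coe h (NeZero.ne n), ZMod.card,
    Nat.div_div_self hd (NeZero.ne n), hdiv]

theorem sum_numInvariantSubsets_addRight {n k : ℕ} [NeZero n] (hk : 0 < k) (hkn : k < n) :
    ∑ j : ZMod n, numInvariantSubsets k (Equiv.addRight j) =
      n.choose k + ∑ h ∈ (Ico 2 n).filter (fun h => n.gcd h ≠ 1 ∧ n / n.gcd h ∣ k),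
        (n.gcd h).choose (k * n.gcd h / n) := by
  have hnk : ¬ n ∣ k := fun h => absurd (Nat.le_of_dvd hk h) (by omega)
  have sum_val : ∑ j : ZMod n, numInvariantSubsets k (Equiv.addRight j) =
      ∑ h ∈ range n, numInvariantSubsets k (Equiv.addRight (h : ZMod n)) :=
    sum_nbij' ZMod.val Nat.cast (fun j _ => by simp [ZMod.val_lt]) (fun _ _ => mem_univ _)
      (fun j _ => by simp) (fun h hh => ZMod.val_cast_of_lt (mem_range.1 hh)) (fun _ _ => by simp)
  rw [sum_val, range_eq_Ico, sum_eq_sum_Ico_succ_bot (NeZero.pos n),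
    sum_eq_sum_Ico_succ_bot (by omega : 0 + 1 < n), sum_filter]
  simp only [numInvariantSubsets_addRight_natCast, zero_add, Nat.gcd_zero_right,
    Nat.gcd_one_right, Nat.div_self (NeZero.pos n), one_dvd, if_true,
    Nat.mul_div_cancel _ (NeZero.pos n), Nat.div_one, hnk, if_false]
  congr 1
  refine sum_congr rfl fun h _ => if_congr ?_ rfl rfl
  exact ⟨fun hdvd => ⟨fun h1 => hnk (by simpa [h1] using hdvd), hdvd⟩, And.right⟩

section Centralizers

variable {α β : Type*}

theorem sumCongr_mem_centralizer_sumCongr_one_iff (g τ₁ : Perm α) (τ₂ : Perm β) :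
    sumCongr τ₁ τ₂ ∈ Subgroup.centralizer {sumCongr g (1 : Perm β)} ↔
      τ₁ ∈ Subgroup.centralizer {g} := by
  simp only [Subgroup.mem_centralizer_singleton_iff, Perm.sumCongr_mul, mul_one, one_mul]
  refine ⟨fun h => Perm.ext fun a => ?_, fun h => by rw [h]⟩
  simpa using congrArg (· (Sum.inl a)) h

theorem mem_range_sumCongrHom_of_mem_centralizer [Finite α] [Finite β] {g : Perm α}
    (hg : ∀ a, g a ≠ a) {τ : Perm (α ⊕ β)}
    (hτ : τ ∈ Subgroup.centralizer {sumCongr g (1 : Perm β)}) :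
    τ ∈ (Perm.sumCongrHom α β).range := by
  refine Perm.mem_sumCongrHom_range_of_perm_mapsTo_inl ?_
  rintro _ ⟨a, rfl⟩
  rw [Subgroup.mem_centralizer_singleton_iff] at hτ
  cases hx : τ (.inl a) with
  | inl a' => exact ⟨a', rfl⟩
  | inr b =>
    -- `τ (inl a)` would be a fixed point of `sumCongr g 1`, hence so would be `inl a`.
    have := congrArg (· (Sum.inl a)) hτ
    simp only [Perm.mul_apply, sumCongr_apply, Sum.map_inl, hx, Sum.map_inr,
      Perm.one_apply] at this
    exact absurd (τ.injective (this.trans hx.symm)) (by simpa using hg a)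

theorem sum_centralizer_sumCongr_one {M : Type*} [AddCommMonoid M] [Finite α] [Fintype β]
    [DecidableEq β] {g : Perm α} (hg : ∀ a, g a ≠ a)
    [Fintype (Subgroup.centralizer {sumCongr g (1 : Perm β)})]
    [Fintype (Subgroup.centralizer {g})] (f : Perm (α ⊕ β) → M) :
    ∑ τ : Subgroup.centralizer {sumCongr g (1 : Perm β)}, f τ =
      ∑ τ₁ : Subgroup.centralizer {g}, ∑ τ₂ : Perm β, f (sumCongr τ₁ τ₂) := by
  rw [← Fintype.sum_prod_type']
  let φ (p : Subgroup.centralizer {g} × Perm β) :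
      Subgroup.centralizer {sumCongr g (1 : Perm β)} :=
    ⟨sumCongr p.1 p.2, (sumCongr_mem_centralizer_sumCongr_one_iff _ _ _).2 p.1.2⟩
  refine (Fintype.sum_bijective φ ⟨?_, ?_⟩ _ (fun τ => f τ) fun _ => rfl).symm
  · rintro ⟨⟨τ₁, _⟩, τ₂⟩ ⟨⟨τ₁', _⟩, τ₂'⟩ h
    have := @Perm.sumCongrHom_injective α β (τ₁, τ₂) (τ₁', τ₂') (Subtype.ext_iff.1 h)
    simp_all
  · rintro ⟨τ, hτ⟩
    obtain ⟨⟨τ₁, τ₂⟩, rfl⟩ := mem_range_sumCongrHom_of_mem_centralizer hg hτ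
    exact ⟨(⟨τ₁, (sumCongr_mem_centralizer_sumCongr_one_iff _ _ _).1 hτ⟩, τ₂), rfl⟩

theorem sum_centralizer_permCongr {M : Type*} [AddCommMonoid M] (e : α ≃ β) (σ : Perm α)
    [Fintype (Subgroup.centralizer {σ})] [Fintype (Subgroup.centralizer {e.permCongr σ})]
    (f : Perm β → M) :
    ∑ τ : Subgroup.centralizer {σ}, f (e.permCongr τ) =
      ∑ τ : Subgroup.centralizer {e.permCongr σ}, f τ := by
  refine Fintype.sum_equiv (e.permCongr.subtypeEquiv fun τ => ?_) _ _ fun _ => rfl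
  simp only [Subgroup.mem_centralizer_singleton_iff]
  rw [← e.permCongrHom.injective.eq_iff, map_mul, map_mul]
  rfl

end Centralizers

theorem eq_addRight_of_mem_centralizer {n : ℕ} [NeZero n] {τ : Perm (ZMod n)}
    (hτ : τ ∈ Subgroup.centralizer {Equiv.addRight 1}) : τ = Equiv.addRight (τ 0) := by
  rw [Subgroup.mem_centralizer_singleton_iff] at hτ
  have step (x : ZMod n) : τ (x + 1) = τ x + 1 := by simpa using congrArg (· x) hτ
  have natCast (m : ℕ) : τ m = m + τ 0 := by
    induction m with
    | zero => simp
    | succ m ih => rw [Nat.cast_succ, step, ih]; ring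
  ext x
  simpa using natCast x.val

theorem sum_centralizer_addRight_one {M : Type*} [AddCommMonoid M] {n : ℕ} [NeZero n]
    [Fintype (Subgroup.centralizer {Equiv.addRight (1 : ZMod n)})] (f : Perm (ZMod n) → M) :
    ∑ τ : Subgroup.centralizer {Equiv.addRight (1 : ZMod n)}, f τ =
      ∑ j : ZMod n, f (Equiv.addRight j) := by
  let φ (j : ZMod n) : Subgroup.centralizer {Equiv.addRight (1 : ZMod n)} :=
    ⟨Equiv.addRight j, Subgroup.mem_centralizer_singleton_iff.2 (by ext; simp [add_right_comm])⟩
  refine (Fintype.sum_bijective φ ⟨fun j j' h => ?_, fun τ => ⟨τ.1 0, ?_⟩⟩ _ (fun τ => f τ)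
    fun _ => rfl).symm
  · simpa [φ] using congrArg (· 0) (Subtype.ext_iff.1 h)
  · exact Subtype.ext (eq_addRight_of_mem_centralizer τ.2).symm

def finTwoMulEquiv (n : ℕ) [NeZero n] : Fin (2 * n) ≃ ZMod n ⊕ Fin n where
  toFun i := if h : (i : ℕ) < n then .inl (i : ℕ) else .inr ⟨i - n, by omega⟩
  invFun := Sum.elim (fun r => ⟨r.val, by have := ZMod.val_lt r; omega⟩)
    (fun r => ⟨n + r, by omega⟩)
  left_inv i := by
    by_cases h : (i : ℕ) < n
    · ext; simp [h, Nat.mod_eq_of_lt h]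
    · ext; simp [h]; omega
  right_inv x := by
    cases x with
    | inl r => simp [ZMod.val_lt]
    | inr r => simp

theorem permCongr_finTwoMulEquiv {n : ℕ} [NeZero n] {σ : Perm (Fin (2 * n))}
    (hσ : ∀ i : Fin (2 * n), (σ i : ℕ) = if (i : ℕ) < n then ((i : ℕ) + 1) % n else (i : ℕ)) :
    (finTwoMulEquiv n).permCongr σ = sumCongr (Equiv.addRight 1) 1 := by
  ext (r | r)
  · simp only [permCongr_apply, finTwoMulEquiv, coe_fn_mk, coe_fn_symm_mk, Sum.elim_inl, hσ,
      if_pos (ZMod.val_lt r), Nat.mod_lt _ (NeZero.pos n), dite_true]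
    simp
  · simp only [permCongr_apply, finTwoMulEquiv, coe_fn_mk, coe_fn_symm_mk, Sum.elim_inr, hσ,
      if_neg (show ¬ n + (r : ℕ) < n by omega)]
    simp

open scoped Classical in
/-- Theorem 3.5: for `n ≥ 2k`, the multiplicity of `χ^{(2n-k,k)}` in `Ind_C^{S_{2n}} 1_C`
is `(1/n)(C(n,k) + Σ_{1<h<n, d_h≠1, (n/d_h)∣k} C(d_h, k⬝d_h/n))`, expressed
denominator-free as `Σ_{τ ∈ C} (F k τ - F (k-1) τ) = n! ⬝ (C(n,k) + Σ ...)`. -/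
theorem chi_2n_minus_k_k_multiplicity (n k : ℕ) (hk : 1 ≤ k) (hn : 2 * k ≤ n)
    (σ : Equiv.Perm (Fin (2 * n)))
    (hσ : ∀ i : Fin (2 * n),
      ((σ i : ℕ) = if (i : ℕ) < n then ((i : ℕ) + 1) % n else (i : ℕ))) :
    ∑ τ : Subgroup.centralizer {σ},
      ((F k (τ : Equiv.Perm (Fin (2 * n))) : ℤ)
        - (F (k - 1) (τ : Equiv.Perm (Fin (2 * n))) : ℤ))
      = (n.factorial : ℤ) *
        ((n.choose k : ℤ) +
          ∑ h ∈ (Finset.Ico 2 n).filter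
            (fun h => Nat.gcd n h ≠ 1 ∧ (n / Nat.gcd n h) ∣ k),
            ((Nat.gcd n h).choose (k * Nat.gcd n h / n) : ℤ)) := by
  have : NeZero n := ⟨by omega⟩
  have : Fact (1 < n) := ⟨by omega⟩
  let N (k : ℕ) (τ : Perm (ZMod n ⊕ Fin n)) : ℤ := numInvariantSubsets k τ
  calc _ = ∑ τ : Subgroup.centralizer {sumCongr (Equiv.addRight (1 : ZMod n)) (1 : Perm (Fin n))},
          (N k τ - N (k - 1) τ) := by
        rw [← permCongr_finTwoMulEquiv hσ]
        refine Eq.trans ?_ (sum_centralizer_permCongr _ σ fun τ => N k τ - N (k - 1) τ)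
        simp only [N, F_eq_numInvariantSubsets, numInvariantSubsets_permCongr]
    _ = ∑ j : ZMod n, ∑ π : Perm (Fin n),
          (N k (sumCongr (Equiv.addRight j) π) - N (k - 1) (sumCongr (Equiv.addRight j) π)) := by
        refine (sum_centralizer_sumCongr_one (fun r => by simp)
          fun τ => N k τ - N (k - 1) τ).trans ?_
        exact sum_centralizer_addRight_one fun τ₁ =>
          ∑ π : Perm (Fin n), (N k (sumCongr τ₁ π) - N (k - 1) (sumCongr τ₁ π))
    _ = ∑ j : ZMod n, (n.factorial : ℤ) * numInvariantSubsets k (Equiv.addRight j) := by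
        refine sum_congr rfl fun j _ => ?_
        rw [sum_numInvariantSubsets_sumCongr_sub _ hk (by rw [Fintype.card_fin]; omega),
          Fintype.card_fin]
    _ = _ := by
        rw [← mul_sum, ← Nat.cast_sum, sum_numInvariantSubsets_addRight hk (by omega)]
        push_cast
        -- the two filters differ only in their `Decidable` instances
        rfl
end

section
/- (Branching-rule computation, equations (4), (8), (13): ⟨χ^{(n)}, χ^{(2n-k,k)}↓_{S_n}⟩ = C(n,k).) Let k ≥ 0 and n ≥ 2k, n ≥ 1. Let P be the subgroup of Equiv.Perm (Fin (2*n)) consisting of all permutations π with π(i) = i for every i < n. Then Σ_{π ∈ P} (F k π − F (k−1) π) = n! · C(n,k), where for k = 0 the term F (k−1) π is interpreted as 0 and the k = 0 identity reads Σ_{π∈P} F 0 π = n!. -/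
open Finset Equiv Equiv.Perm Nat

lemma Finset.image_perm_eq_self_iff {α : Type*} [DecidableEq α] (σ : Perm α) (s : Finset α) :
    s.image σ = s ↔ ∀ x, σ x ∈ s ↔ x ∈ s := by
  refine ⟨fun h x => ?_, fun h => ?_⟩
  · rw [← h, σ.injective.mem_finset_image, h]
  · ext y
    rw [← σ.apply_symm_apply y, σ.injective.mem_finset_image, h]

lemma Equiv.Perm.ofSubtype_eq_permCongr_sumCongr {α : Type*} {p : α → Prop} [DecidablePred p]
    (σ : Perm (Subtype p)) :
    ofSubtype σ = (sumCompl p).permCongr (Equiv.sumCongr σ (Equiv.refl _)) := by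
  ext a
  by_cases h : p a <;> simp [permCongr_apply, h, ofSubtype_apply_of_mem, ofSubtype_apply_of_not_mem]

lemma card_filter_card_le_add_one (α : Type*) [Fintype α] [DecidableEq α] (k : ℕ) :
    #{A : Finset α | #A ≤ k + 1} = #{A : Finset α | #A ≤ k} + (Fintype.card α).choose (k + 1) := by
  rw [← Finset.card_univ, ← card_powersetCard, ← card_union_of_disjoint]
  · congr 1
    ext A
    simp only [mem_filter, mem_univ, true_and, mem_union, mem_powersetCard_univ]
    omega
  · simp only [disjoint_left, mem_filter, mem_univ, true_and, mem_powersetCard_univ]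
    omega

section FixedFinsets

variable {α β γ : Type*} [Fintype α] [DecidableEq α] [Fintype β] [DecidableEq β]
  [Fintype γ] [DecidableEq γ]

def fixedFinsets (k : ℕ) (τ : Perm α) : Finset (Finset α) :=
  {s | #s = k ∧ s.image τ = s}

lemma card_perm_image_eq_self (s : Finset α) :
    #{σ : Perm α | s.image σ = s} = (#s)! * (Fintype.card α - #s)! := by
  have key := DomMulAct.stabilizer_card (fun x : α => decide (x ∈ s))
  simp only [Fintype.prod_bool, Fintype.card_subtype, decide_eq_true_eq, decide_eq_false_iff_not,
    filter_mem_eq_inter, univ_inter, filter_not, ← compl_eq_univ_sdiff, card_compl] at key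
  rw [← key]
  congr 1
  ext σ
  simp [image_perm_eq_self_iff, funext_iff]

lemma sum_card_fixedFinsets {k : ℕ} (hk : k ≤ Fintype.card α) :
    ∑ σ : Perm α, #(fixedFinsets k σ) = (Fintype.card α)! := by
  have hfixed (σ : Perm α) :
      fixedFinsets k σ = {s ∈ powersetCard k (univ : Finset α) | s.image σ = s} := by
    ext; simp [fixedFinsets]
  calc ∑ σ : Perm α, #(fixedFinsets k σ)
      = ∑ s ∈ powersetCard k univ, #{σ : Perm α | s.image σ = s} := by
        simp only [hfixed, card_filter]
        exact sum_comm
    _ = ∑ _s ∈ powersetCard k univ, k ! * (Fintype.card α - k)! :=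
        sum_congr rfl fun s hs => by rw [card_perm_image_eq_self, mem_powersetCard_univ.1 hs]
    _ = (Fintype.card α)! := by
        rw [sum_const, card_powersetCard, Finset.card_univ, smul_eq_mul, ← mul_assoc,
          choose_mul_factorial_mul_factorial hk]

lemma card_fixedFinsets_permCongr (k : ℕ) (e : α ≃ β) (τ : Perm α) :
    #(fixedFinsets k (e.permCongr τ)) = #(fixedFinsets k τ) := by
  refine (card_equiv e.finsetCongr fun s => ?_).symm
  have : (s.map e.toEmbedding).image (e.permCongr τ) = (s.image τ).map e.toEmbedding := by
    simp [map_eq_image, image_image, Function.comp_def, permCongr_apply]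
  simp [fixedFinsets, this]

lemma mem_fixedFinsets_sumCongr_refl {k : ℕ} {σ : Perm β} {s : Finset (β ⊕ γ)} :
    s ∈ fixedFinsets k (Equiv.sumCongr σ (Equiv.refl γ)) ↔
      #s.toRight ≤ k ∧ s.toLeft ∈ fixedFinsets (k - #s.toRight) σ := by
  have himage : s.image (Equiv.sumCongr σ (Equiv.refl γ)) = s ↔ s.toLeft.image σ = s.toLeft := by
    have hleft : (s.image (Equiv.sumCongr σ (Equiv.refl γ))).toLeft = s.toLeft.image σ := by
      ext; simp
    have hright : (s.image (Equiv.sumCongr σ (Equiv.refl γ))).toRight = s.toRight := by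
      ext; simp
    rw [← sumEquiv.injective.eq_iff, Prod.ext_iff]
    simp [hleft, hright]
  have hcard := card_toLeft_add_card_toRight (u := s)
  simp only [fixedFinsets, mem_filter, mem_univ, true_and, himage]
  rw [← and_assoc]
  exact and_congr_left fun _ => by omega

lemma card_fixedFinsets_sumCongr_refl (k : ℕ) (σ : Perm β) :
    #(fixedFinsets k (Equiv.sumCongr σ (Equiv.refl γ))) =
      ∑ A : Finset γ with #A ≤ k, #(fixedFinsets (k - #A) σ) := by
  rw [card_equiv sumEquiv.toEquiv (t := {p | #p.2 ≤ k ∧ p.1 ∈ fixedFinsets (k - #p.2) σ})]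
  · rw [card_filter, Fintype.sum_prod_type_right, sum_filter]
    refine sum_congr rfl fun A _ => ?_
    by_cases h : #A ≤ k <;> simp [h]
  · simp [mem_fixedFinsets_sumCongr_refl]

lemma sum_card_fixedFinsets_sumCongr_refl {k : ℕ} (hk : k ≤ Fintype.card β) :
    ∑ σ : Perm β, #(fixedFinsets k (Equiv.sumCongr σ (Equiv.refl γ))) =
      (Fintype.card β)! * #{A : Finset γ | #A ≤ k} := by
  simp_rw [card_fixedFinsets_sumCongr_refl]
  rw [sum_comm, sum_congr rfl fun A _ => sum_card_fixedFinsets (by omega), sum_const,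
    smul_eq_mul, mul_comm]

theorem sum_card_fixedFinsets_of_fix_compl {p : α → Prop} [DecidablePred p] {k : ℕ}
    (hk : k ≤ Fintype.card (Subtype p)) :
    ∑ π ∈ univ.filter (fun π : Perm α => ∀ a, ¬p a → π a = a), #(fixedFinsets k π) =
      (Fintype.card (Subtype p))! * #{A : Finset {a // ¬p a} | #A ≤ k} := by
  rw [sum_subtype (p := fun π : Perm α => ∀ a, ¬p a → π a = a) _ (by simp),
    ← (Perm.subtypeEquivSubtypePerm p).sum_comp]
  simp only [Perm.subtypeEquivSubtypePerm_apply_coe, ofSubtype_eq_permCongr_sumCongr,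
    card_fixedFinsets_permCongr]
  exact sum_card_fixedFinsets_sumCongr_refl hk

end FixedFinsets

lemma sum_F_of_fix_first_half {n j : ℕ} (hj : j ≤ n) :
    ∑ π ∈ univ.filter (fun π : Perm (Fin (2 * n)) => ∀ i : Fin (2 * n), (i : ℕ) < n → π i = i),
      F j π = n ! * #{A : Finset {i : Fin (2 * n) // ¬n ≤ (i : ℕ)} | #A ≤ j} := by
  have hmoving : Fintype.card {i : Fin (2 * n) // n ≤ (i : ℕ)} = n := by
    simp_rw [← not_lt, Fintype.card_subtype_compl, Fintype.card_subtype, Fin.card_filter_val_lt,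
      Fintype.card_fin]
    omega
  have := sum_card_fixedFinsets_of_fix_compl (p := fun i : Fin (2 * n) => n ≤ (i : ℕ)) (k := j)
    (by omega)
  rw [hmoving] at this
  -- not `exact`: the filter's `Decidable` instance differs from the one in `this`
  convert this using 2
  · simp
  · rfl

theorem branching_binomial_general (n k : ℕ) (hk : 2 * k ≤ n) :
    ∑ π ∈ (Finset.univ : Finset (Equiv.Perm (Fin (2 * n)))).filter
        (fun π => ∀ i : Fin (2 * n), (i : ℕ) < n → π i = i),
      ((F k π : ℤ) - (if k = 0 then 0 else (F (k - 1) π : ℤ)))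
      = (n.factorial : ℤ) * (n.choose k : ℤ) := by
  have hfixed : Fintype.card {i : Fin (2 * n) // ¬n ≤ (i : ℕ)} = n := by
    simp only [not_le, Fintype.card_subtype, Fin.card_filter_val_lt]
    omega
  rcases k with _ | k
  · simp only [↓reduceIte, sub_zero]
    exact_mod_cast (sum_F_of_fix_first_half (zero_le n)).trans (by simp [filter_eq'])
  · simp only [add_eq_zero, one_ne_zero, and_false, ↓reduceIte, add_tsub_cancel_right,
      sum_sub_distrib]
    rw [← Nat.cast_sum, ← Nat.cast_sum, sum_F_of_fix_first_half (by omega),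
      sum_F_of_fix_first_half (by omega), card_filter_card_le_add_one, hfixed]
    push_cast
    ring

/-- Equations (4), (8), (13): `⟨χ^{(n)}, χ^{(2n-k,k)}↓_{S_n}⟩ = C(n,k)` for `n ≥ 2k`,
expressed as `Σ_{π ∈ P} (F k π - F (k-1) π) = n! ⬝ C(n,k)` where `P ≅ S_n` is the
subgroup of permutations fixing all points `i < n` (with `F (k-1) π` read as `0`
when `k = 0`). -/
theorem branching_binomial (n k : ℕ) (hn : 1 ≤ n) (hk : 2 * k ≤ n) :
    ∑ π ∈ (Finset.univ : Finset (Equiv.Perm (Fin (2 * n)))).filter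
        (fun π => ∀ i : Fin (2 * n), (i : ℕ) < n → π i = i),
      ((F k π : ℤ) - (if k = 0 then 0 else (F (k - 1) π : ℤ)))
      = (n.factorial : ℤ) * (n.choose k : ℤ) :=
  branching_binomial_general n k hk
end

section
/- (Equations (9) and (14): the full-cycle terms vanish, χ^{(2n-k,k)} summed over (σ, π) with π ∈ S_n.) Let k ≥ 1 and n ≥ 2k. Let σ ∈ Equiv.Perm (Fin (2*n)) be the n-cycle with σ(i) = i+1 mod n for i < n and σ(i) = i for i ≥ n, and let P be the subgroup of Equiv.Perm (Fin (2*n)) consisting of all permutations π with π(i) = i for every i < n. Then Σ_{π ∈ P} (F k (σ*π) − F (k−1) (σ*π)) = 0. -/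
open Equiv MulAction Pointwise Set

theorem F_eq_card_fixedBy {m : ℕ} (k : ℕ) (π : Perm (Fin m)) :
    F k π = Nat.card (fixedBy (powersetCard (Fin m) k) π) := by
  rw [F, ← Fintype.card_subtype, ← Nat.card_eq_fintype_card]
  refine Nat.card_congr <| (subtypeSubtypeEquivSubtypeInter (fun s : Finset (Fin m) => s.card = k)
    (fun s => s.image π = s)).symm.trans <| subtypeEquivRight fun s => ?_
  exact (Subtype.ext_iff (a1 := π • (show powersetCard (Fin m) k from s)) (a2 := s)).symm

section Subsets

variable {α : Type*} [DecidableEq α]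

theorem sum_card_fixedBy_powersetCard [Fintype α] {k : ℕ} (hk : k ≤ Fintype.card α) :
    ∑ π : Perm α, Nat.card (fixedBy (powersetCard α k) π) = (Fintype.card α).factorial := by
  have : IsPretransitive (Perm α) (powersetCard α k) := powersetCard.isPretransitive
  have : Nonempty (powersetCard α k) := by
    obtain ⟨s, -, hs⟩ := Finset.exists_subset_card_eq (s := Finset.univ) hk
    exact ⟨⟨s, hs⟩⟩
  obtain ⟨_⟩ := (pretransitive_iff_unique_quotient_of_nonempty (Perm α) (powersetCard α k)).1 ‹_›
  simp_rw [Nat.card_eq_fintype_card]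
  rw [sum_card_fixedBy_eq_card_orbits_mul_card_group, Fintype.card_unique, one_mul,
    Fintype.card_perm]

variable {p : α → Prop} {τ : Perm α} {ρ : Perm (Subtype p)} {k : ℕ}

theorem Set.powersetCard.map_subtype_smul (hτρ : ∀ x : Subtype p, τ x = ρ x)
    (t : powersetCard (Subtype p) k) :
    powersetCard.map k (Function.Embedding.subtype p) (ρ • t) =
      τ • powersetCard.map k (Function.Embedding.subtype p) t := by
  apply Subtype.ext
  simp only [powersetCard.val_map, powersetCard.coe_smul, Finset.smul_finset_def,
    Finset.map_eq_image, Finset.image_image]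
  exact Finset.image_congr fun x _ => (hτρ x).symm

theorem card_fixedBy_powersetCard_subtype [DecidablePred p] (hτρ : ∀ x : Subtype p, τ x = ρ x)
    (hp : ∀ s : Finset α, s.card = k → τ • s = s → ∀ x ∈ s, p x) :
    Nat.card (fixedBy (powersetCard α k) τ) =
      Nat.card (fixedBy (powersetCard (Subtype p) k) ρ) := by
  have hinj : Function.Injective (powersetCard.map k (Function.Embedding.subtype p)) :=
    fun s t h => Subtype.ext (Finset.map_injective _ (congrArg Subtype.val h))
  suffices himage : powersetCard.map k (Function.Embedding.subtype p) ''
      fixedBy (powersetCard (Subtype p) k) ρ = fixedBy (powersetCard α k) τ by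
    rw [← himage, Nat.card_image_of_injective hinj]
  ext s
  constructor
  · rintro ⟨t, ht, rfl⟩
    rw [mem_fixedBy, ← powersetCard.map_subtype_smul hτρ, ht]
  · intro hs
    have hsp : ∀ x ∈ (s : Finset α), p x := hp s s.2 (congrArg Subtype.val hs)
    set t : powersetCard (Subtype p) k := ⟨(s : Finset α).subtype p, by
      rw [powersetCard.mem_iff, Finset.card_subtype, Finset.filter_true_of_mem hsp]
      exact s.2⟩
    have hts : powersetCard.map k (Function.Embedding.subtype p) t = s :=
      Subtype.ext (Finset.subtype_map_of_mem hsp)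
    refine ⟨t, hinj ?_, hts⟩
    rw [powersetCard.map_subtype_smul hτρ, hts, hs]

theorem Equiv.Perm.sum_comp_ofSubtype [Fintype α] [DecidablePred p] {M : Type*}
    [AddCommMonoid M] (f : Perm α → M) :
    ∑ ρ : Perm (Subtype p), f (ofSubtype ρ) =
      ∑ π ∈ Finset.univ.filter (fun π : Perm α => ∀ a, ¬ p a → π a = a), f π :=
  (Equiv.sum_comp (Perm.subtypeEquivSubtypePerm p) (fun π => f π.1)).trans
    (Finset.sum_subtype _ (fun π => by simp) f).symm

end Subsets

def IsLowerHalfRotation {n : ℕ} (σ : Perm (Fin (2 * n))) : Prop :=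
  ∀ i : Fin (2 * n), ((σ i : ℕ) = if (i : ℕ) < n then ((i : ℕ) + 1) % n else (i : ℕ))

namespace IsLowerHalfRotation

variable {n : ℕ} {σ π : Perm (Fin (2 * n))}

theorem mul_pow_apply_val (hσ : IsLowerHalfRotation σ)
    (hπ : ∀ i : Fin (2 * n), (i : ℕ) < n → π i = i) {x : Fin (2 * n)} (hx : (x : ℕ) < n)
    (m : ℕ) : (((σ * π) ^ m) x : ℕ) = ((x : ℕ) + m) % n := by
  induction m with
  | zero => exact (Nat.mod_eq_of_lt hx).symm
  | succ m ih =>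
    have hlt : (((σ * π) ^ m) x : ℕ) < n := ih ▸ Nat.mod_lt _ (by omega)
    rw [pow_succ', Perm.mul_apply, Perm.mul_apply, hπ _ hlt, hσ, if_pos hlt, ih,
      Nat.mod_add_mod, add_assoc]

theorem filter_lt_subset_of_smul_eq (hσ : IsLowerHalfRotation σ)
    (hπ : ∀ i : Fin (2 * n), (i : ℕ) < n → π i = i) {s : Finset (Fin (2 * n))}
    (hs : (σ * π) • s = s) {x : Fin (2 * n)} (hxs : x ∈ s) (hx : (x : ℕ) < n) :
    Finset.univ.filter (fun i : Fin (2 * n) => (i : ℕ) < n) ⊆ s := by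
  intro y hy
  have hyn : (y : ℕ) < n := (Finset.mem_filter.1 hy).2
  have hpow : ((σ * π) ^ ((y : ℕ) + n - x)) x = y := by
    apply Fin.ext
    rw [hσ.mul_pow_apply_val hπ hx, show (x : ℕ) + ((y : ℕ) + n - x) = y + n by omega,
      Nat.add_mod_right, Nat.mod_eq_of_lt hyn]
  have hpow_s : ((σ * π) ^ ((y : ℕ) + n - x)) • s = s :=
    (stabilizer (Perm (Fin (2 * n))) s).pow_mem hs _
  rw [← hpow, ← Perm.smul_def, ← hpow_s]
  exact Finset.smul_mem_smul_finset hxs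

theorem le_of_mem_of_smul_eq (hσ : IsLowerHalfRotation σ)
    (hπ : ∀ i : Fin (2 * n), (i : ℕ) < n → π i = i) {s : Finset (Fin (2 * n))}
    (hs : (σ * π) • s = s) (hcard : s.card < n) : ∀ x ∈ s, n ≤ (x : ℕ) := by
  intro x hxs
  by_contra! hx
  have := Finset.card_le_card (hσ.filter_lt_subset_of_smul_eq hπ hs hxs hx)
  rw [Fin.card_filter_val_lt] at this
  omega

theorem mul_ofSubtype_apply (hσ : IsLowerHalfRotation σ)
    (ρ : Perm {x : Fin (2 * n) // n ≤ (x : ℕ)}) (x : {x : Fin (2 * n) // n ≤ (x : ℕ)}) :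
    (σ * Perm.ofSubtype ρ) x = ρ x := by
  rw [Perm.mul_apply, Perm.ofSubtype_apply_of_mem ρ x.2]
  exact Fin.ext ((hσ _).trans (if_neg (not_lt.2 (ρ x).2)))

theorem sum_F_mul (hσ : IsLowerHalfRotation σ) {j : ℕ} (hj : j < n) :
    ∑ π ∈ Finset.univ.filter
        (fun π : Perm (Fin (2 * n)) => ∀ i : Fin (2 * n), (i : ℕ) < n → π i = i),
      F j (σ * π) = n.factorial := by
  have hcard : Fintype.card {x : Fin (2 * n) // n ≤ (x : ℕ)} = n := by
    simp_rw [← not_lt]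
    rw [Fintype.card_subtype_compl, Fintype.card_subtype, Fin.card_filter_val_lt,
      Fintype.card_fin]
    omega
  have hlow (ρ : Perm {x : Fin (2 * n) // n ≤ (x : ℕ)}) (i : Fin (2 * n)) (hi : (i : ℕ) < n) :
      Perm.ofSubtype ρ i = i :=
    Perm.ofSubtype_apply_of_not_mem ρ (not_le.2 hi)
  calc _ = ∑ ρ : Perm {x : Fin (2 * n) // n ≤ (x : ℕ)}, F j (σ * Perm.ofSubtype ρ) := by
        rw [Perm.sum_comp_ofSubtype (fun π => F j (σ * π))]
        simp only [not_le]
    _ = ∑ ρ : Perm {x : Fin (2 * n) // n ≤ (x : ℕ)},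
          Nat.card (fixedBy (powersetCard {x : Fin (2 * n) // n ≤ (x : ℕ)} j) ρ) :=
        Finset.sum_congr rfl fun ρ _ => (F_eq_card_fixedBy j _).trans <|
          card_fixedBy_powersetCard_subtype (hσ.mul_ofSubtype_apply ρ) fun s hs hinv =>
            hσ.le_of_mem_of_smul_eq (hlow ρ) hinv (hs ▸ hj)
    _ = n.factorial := by rw [sum_card_fixedBy_powersetCard (hcard.symm ▸ hj.le), hcard]

end IsLowerHalfRotation

theorem full_cycle_terms_vanish_general (n k : ℕ) (hn : 2 * k ≤ n)
    (σ : Equiv.Perm (Fin (2 * n)))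
    (hσ : ∀ i : Fin (2 * n),
      ((σ i : ℕ) = if (i : ℕ) < n then ((i : ℕ) + 1) % n else (i : ℕ))) :
    ∑ π ∈ (Finset.univ : Finset (Equiv.Perm (Fin (2 * n)))).filter
        (fun π => ∀ i : Fin (2 * n), (i : ℕ) < n → π i = i),
      ((F k (σ * π) : ℤ) - (F (k - 1) (σ * π) : ℤ)) = 0 := by
  obtain rfl | hk := k.eq_zero_or_pos
  · simp
  rw [Finset.sum_sub_distrib, ← Nat.cast_sum, ← Nat.cast_sum,
    IsLowerHalfRotation.sum_F_mul hσ (by omega), IsLowerHalfRotation.sum_F_mul hσ (by omega),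
    sub_self]

/-- Equations (9) and (14): the full-cycle terms vanish,
`Σ_{π ∈ P} χ^{(2n-k,k)}(σπ) = Σ_{π ∈ P} (F k (σπ) - F (k-1) (σπ)) = 0`
for `1 ≤ k` and `n ≥ 2k`, where `P ≅ S_n` fixes all points `i < n`. -/
theorem full_cycle_terms_vanish (n k : ℕ) (hk : 1 ≤ k) (hn : 2 * k ≤ n)
    (σ : Equiv.Perm (Fin (2 * n)))
    (hσ : ∀ i : Fin (2 * n),
      ((σ i : ℕ) = if (i : ℕ) < n then ((i : ℕ) + 1) % n else (i : ℕ))) :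
    ∑ π ∈ (Finset.univ : Finset (Equiv.Perm (Fin (2 * n)))).filter
        (fun π => ∀ i : Fin (2 * n), (i : ℕ) < n → π i = i),
      ((F k (σ * π) : ℤ) - (F (k - 1) (σ * π) : ℤ)) = 0 :=
  full_cycle_terms_vanish_general n k hn σ hσ
end

section
/- (Equation (5): Σ_{λ⊢n} χ^{(n,n)}_{(n,λ)}|K_λ| = n!.) Let n ≥ 2. Let σ ∈ Equiv.Perm (Fin (2*n)) be the n-cycle with σ(i) = i+1 mod n for i < n and σ(i) = i for i ≥ n, and let P be the subgroup of Equiv.Perm (Fin (2*n)) consisting of all permutations π with π(i) = i for every i < n. Then Σ_{π ∈ P} (F n (σ*π) − F (n−1) (σ*π)) = n!. -/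
open Finset Equiv

section InvariantFinsets

variable {α : Type*} [DecidableEq α] {τ : Perm α} {L s : Finset α}

theorem image_perm_compl_eq_self [Fintype α] (hs : s.image τ = s) : sᶜ.image τ = sᶜ :=
  coe_injective (by rw [coe_image, coe_compl, Equiv.image_compl, ← coe_image, hs])

theorem image_perm_erase_eq_self_iff (hs : s.image τ = s) {x : α} (hx : x ∈ s) :
    (s.erase x).image τ = s.erase x ↔ τ x = x := by
  rw [image_erase τ.injective, hs, erase_inj s (hs ▸ mem_image_of_mem τ hx)]

theorem Equiv.Perm.IsCycleOn.image_finset_eq_self (hτ : τ.IsCycleOn L) : L.image τ = L :=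
  coe_injective (by rw [coe_image]; exact hτ.1.image_eq)

theorem Equiv.Perm.IsCycleOn.subset_or_subset_compl [Fintype α] (hτ : τ.IsCycleOn L)
    (hs : s.image τ = s) : L ⊆ s ∨ s ⊆ Lᶜ := by
  by_cases hdisj : _root_.Disjoint s L
  · exact .inr (subset_compl_iff_disjoint_right.mpr hdisj)
  obtain ⟨a, has, haL⟩ := not_disjoint_iff.mp hdisj
  have hmaps : Set.MapsTo τ s s := fun x hx => hs ▸ mem_image_of_mem τ hx
  refine .inl fun y hy => ?_
  obtain ⟨k, -, rfl⟩ := hτ.exists_pow_eq haL hy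
  exact hmaps.perm_pow k has

end InvariantFinsets

section InvariantSubsetCount

variable {m : ℕ} {τ : Perm (Fin m)} {L : Finset (Fin m)}

theorem F_eq_two (hτ : τ.IsCycleOn L) {k : ℕ} (hk : 0 < k) (hL : #L = k) (hLc : #Lᶜ = k) :
    F k τ = 2 := by
  have hinv : ({s | #s = k ∧ s.image τ = s} : Finset (Finset (Fin m))) = {L, Lᶜ} := by
    ext s
    simp only [mem_filter, mem_univ, true_and, mem_insert, mem_singleton]
    constructor
    · rintro ⟨hs, hsτ⟩
      rcases hτ.subset_or_subset_compl hsτ with hLs | hsL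
      · exact .inl (eq_of_subset_of_card_le hLs (hs.trans hL.symm).le).symm
      · exact .inr (eq_of_subset_of_card_le hsL (hLc.trans hs.symm).le)
    · rintro (rfl | rfl)
      · exact ⟨hL, hτ.image_finset_eq_self⟩
      · exact ⟨hLc, image_perm_compl_eq_self hτ.image_finset_eq_self⟩
  obtain ⟨a, ha⟩ := card_pos.mp (hL ▸ hk)
  have hne : L ≠ Lᶜ := fun h => (mem_compl.mp (h ▸ ha)) ha
  rw [F, hinv, card_pair hne]

theorem F_pred_eq_card_fixed_compl (hτ : τ.IsCycleOn L) {k : ℕ} (hk : 0 < k) (hL : k ≤ #L)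
    (hLc : #Lᶜ = k) : F (k - 1) τ = #{x ∈ Lᶜ | τ x = x} := by
  have hUτ := image_perm_compl_eq_self hτ.image_finset_eq_self
  have hinv : ({s | #s = k - 1 ∧ s.image τ = s} : Finset (Finset (Fin m)))
      = {x ∈ Lᶜ | τ x = x}.image Lᶜ.erase := by
    ext s
    simp only [mem_filter, mem_univ, true_and, mem_image]
    constructor
    · rintro ⟨hs, hsτ⟩
      have hsU : s ⊆ Lᶜ := (hτ.subset_or_subset_compl hsτ).resolve_left fun hLs => by
        have := card_le_card hLs
        omega
      have hcov : s ⋖ Lᶜ := covBy_iff_card_sdiff_eq_one.mpr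
        ⟨hsU, by rw [card_sdiff_of_subset hsU]; omega⟩
      obtain ⟨x, hx, rfl⟩ := covBy_iff_exists_erase.mp hcov
      exact ⟨x, ⟨hx, (image_perm_erase_eq_self_iff hUτ hx).mp hsτ⟩, rfl⟩
    · rintro ⟨x, ⟨hx, hτx⟩, rfl⟩
      exact ⟨by rw [card_erase_of_mem hx, hLc], (image_perm_erase_eq_self_iff hUτ hx).mpr hτx⟩
  rw [F, hinv, card_image_of_injOn ((erase_injOn Lᶜ).mono (coe_subset.mpr (filter_subset _ _)))]

end InvariantSubsetCount

section PermsFixingPointwise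

variable {α : Type*} [Fintype α] [DecidableEq α] (p : α → Prop) [DecidablePred p]

theorem card_perm_fixing_pointwise :
    #{π : Perm α | ∀ x, p x → π x = x} = (#{x | ¬ p x}).factorial := by
  rw [← Fintype.card_subtype, ← Fintype.card_subtype, ← Fintype.card_perm]
  exact Fintype.card_congr ((Perm.subtypeEquivSubtypePerm (¬ p ·)).trans
    (subtypeEquivRight fun π => by simp only [not_not])).symm

theorem sum_card_fixed_perm_fixing_pointwise (hp : ∃ x, ¬ p x) :
    ∑ π ∈ {π : Perm α | ∀ x, p x → π x = x}, #{x | ¬ p x ∧ π x = x}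
      = (#{x | ¬ p x}).factorial := by
  set P : Finset (Perm α) := {π | ∀ x, p x → π x = x}
  set U : Finset α := {x | ¬ p x}
  have hstab : ∀ x ∈ U, #{π ∈ P | π x = x} = (#U - 1).factorial := by
    intro x hx
    have hfix : {π ∈ P | π x = x} = ({π | ∀ y, (p y ∨ y = x) → π y = y} : Finset (Perm α)) := by
      ext π
      simp only [P, mem_filter, mem_univ, true_and]
      constructor
      · rintro ⟨hπ, hπx⟩ y (hy | rfl)
        exacts [hπ y hy, hπx]
      · intro hπ
        exact ⟨fun y hy => hπ y (.inl hy), hπ x (.inr rfl)⟩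
    rw [hfix, card_perm_fixing_pointwise, ← card_erase_of_mem hx]
    congr 2
    ext y
    simp only [U, mem_filter, mem_univ, true_and, mem_erase, not_or]
    tauto
  obtain ⟨x₀, hx₀⟩ := hp
  have hU : #U ≠ 0 := (card_pos.mpr ⟨x₀, by simpa [U] using hx₀⟩).ne'
  calc ∑ π ∈ P, #{x | ¬ p x ∧ π x = x} = ∑ π ∈ P, #{x ∈ U | π x = x} := by
        simp only [U, filter_filter]
    _ = ∑ x ∈ U, #{π ∈ P | π x = x} :=
        sum_card_bipartiteAbove_eq_sum_card_bipartiteBelow _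
    _ = #U * (#U - 1).factorial := by rw [sum_congr rfl hstab, sum_const, smul_eq_mul]
    _ = (#U).factorial := Nat.mul_factorial_pred hU

end PermsFixingPointwise

theorem Equiv.Perm.not_apply_of_forall_imp_apply_eq {α : Type*} {p : α → Prop} {π : Perm α}
    (hπ : ∀ x, p x → π x = x) {x : α} (hx : ¬ p x) : ¬ p (π x) :=
  fun h => hx (π.injective (hπ _ h) ▸ h)

section RotationOnInitialSegment

variable {m n : ℕ} {τ : Perm (Fin m)}
  (hτ : ∀ i : Fin m, (i : ℕ) < n → (τ i : ℕ) = (i + 1) % n)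
include hτ

theorem pow_apply_val_of_apply_val_eq_succ_mod {i : Fin m} (hi : (i : ℕ) < n) (k : ℕ) :
    ((τ ^ k) i : ℕ) = (i + k) % n := by
  induction k with
  | zero => simp [Nat.mod_eq_of_lt hi]
  | succ k ih =>
    rw [pow_succ', Perm.mul_apply, hτ _ (ih ▸ Nat.mod_lt _ (by omega)), ih, Nat.mod_add_mod,
      add_assoc]

theorem isCycleOn_filter_val_lt_of_apply_val_eq_succ_mod :
    τ.IsCycleOn ({i | (i : ℕ) < n} : Finset (Fin m)) := by
  set L : Finset (Fin m) := {i | (i : ℕ) < n}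
  have hmem : ∀ i, i ∈ (L : Set (Fin m)) ↔ (i : ℕ) < n := by simp [L]
  have hmaps : Set.MapsTo τ L L := fun i hi => by
    rw [hmem] at hi ⊢
    exact hτ i hi ▸ Nat.mod_lt _ (by omega)
  refine ⟨((Set.toFinite _).injOn_iff_bijOn_of_mapsTo hmaps).mp τ.injective.injOn,
    fun i hi j hj => ?_⟩
  rw [hmem] at hi hj
  refine ⟨((j + n - i : ℕ) : ℤ), Fin.ext ?_⟩
  rw [zpow_natCast, pow_apply_val_of_apply_val_eq_succ_mod hτ hi,
    show (i : ℕ) + (j + n - i) = j + n by omega, Nat.add_mod_right, Nat.mod_eq_of_lt hj]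

end RotationOnInitialSegment

theorem F_sub_F_pred_rotation_mul {n : ℕ} (hn : 0 < n) {σ π : Perm (Fin (2 * n))}
    (hσ : ∀ i : Fin (2 * n), (σ i : ℕ) = if (i : ℕ) < n then ((i : ℕ) + 1) % n else (i : ℕ))
    (hπ : ∀ i : Fin (2 * n), (i : ℕ) < n → π i = i) :
    (F n (σ * π) : ℤ) - F (n - 1) (σ * π) = 2 - #{i : Fin (2 * n) | ¬ (i : ℕ) < n ∧ π i = i} := by
  set L : Finset (Fin (2 * n)) := {i | (i : ℕ) < n}
  have hL : #L = n := by simp only [L, Fin.card_filter_val_lt]; omega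
  have hLc : #Lᶜ = n := by rw [card_compl, Fintype.card_fin, hL]; omega
  have hlow : ∀ i : Fin (2 * n), (i : ℕ) < n → ((σ * π) i : ℕ) = (i + 1) % n := fun i hi => by
    rw [Perm.mul_apply, hπ i hi, hσ, if_pos hi]
  have hhigh : ∀ i : Fin (2 * n), ¬ (i : ℕ) < n → (σ * π) i = π i := fun i hi => Fin.ext (by
    rw [Perm.mul_apply, hσ, if_neg (Perm.not_apply_of_forall_imp_apply_eq hπ hi)])
  have hcyc := isCycleOn_filter_val_lt_of_apply_val_eq_succ_mod hlow
  have hfix : {i ∈ Lᶜ | (σ * π) i = i}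
      = ({i | ¬ (i : ℕ) < n ∧ π i = i} : Finset (Fin (2 * n))) := by
    ext i
    simp only [L, compl_filter, mem_filter, mem_univ, true_and, and_congr_right_iff]
    intro hi
    rw [hhigh i hi]
  rw [F_eq_two hcyc hn hL hLc, ← hfix, F_pred_eq_card_fixed_compl hcyc hn hL.ge hLc]
  push_cast
  ring

/-- Equation (5): `Σ_{λ⊢n} χ^{(n,n)}_{(n,λ)}|K_λ| = n!`, expressed as
`Σ_{π ∈ P} (F n (σπ) - F (n-1) (σπ)) = n!` where `P ≅ S_n` fixes all points `i < n`. -/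
theorem eq5 (n : ℕ) (hn : 2 ≤ n) (σ : Equiv.Perm (Fin (2 * n)))
    (hσ : ∀ i : Fin (2 * n),
      ((σ i : ℕ) = if (i : ℕ) < n then ((i : ℕ) + 1) % n else (i : ℕ))) :
    ∑ π ∈ (Finset.univ : Finset (Equiv.Perm (Fin (2 * n)))).filter
        (fun π => ∀ i : Fin (2 * n), (i : ℕ) < n → π i = i),
      ((F n (σ * π) : ℤ) - (F (n - 1) (σ * π) : ℤ)) = (n.factorial : ℤ) := by
  set P : Finset (Perm (Fin (2 * n))) := {π | ∀ i : Fin (2 * n), (i : ℕ) < n → π i = i}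
  have hU : #{i : Fin (2 * n) | ¬ (i : ℕ) < n} = n := by
    rw [← compl_filter, card_compl, Fintype.card_fin, Fin.card_filter_val_lt]
    omega
  -- `convert` bridges the two `Decidable` instances of the `∀ i : Fin (2 * n)` filter predicate.
  have hP : #P = n.factorial := by
    convert card_perm_fixing_pointwise (fun i : Fin (2 * n) => (i : ℕ) < n)
    exact hU.symm
  have hfixed : ∑ π ∈ P, #{i : Fin (2 * n) | ¬ (i : ℕ) < n ∧ π i = i} = n.factorial := by
    convert sum_card_fixed_perm_fixing_pointwise (fun i : Fin (2 * n) => (i : ℕ) < n)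
      ⟨⟨n, by omega⟩, by simp⟩
    exact hU.symm
  rw [sum_congr rfl fun π hπ => F_sub_F_pred_rotation_mul (by omega) hσ (mem_filter.mp hπ).2,
    sum_sub_distrib, sum_const, hP, ← Nat.cast_sum, hfixed]
  ring
end

section
/- (Equation (6): Σ_{λ⊢n} χ^{(n,n)}_{((n/d_h)^{d_h},λ)}|K_λ| = n! for each h with d_h ≠ 1.) Let n ≥ 2 and let h satisfy 1 < h < n and gcd(n,h) ≠ 1. Let σ ∈ Equiv.Perm (Fin (2*n)) be the n-cycle with σ(i) = i+1 mod n for i < n and σ(i) = i for i ≥ n, and let P be the subgroup of Equiv.Perm (Fin (2*n)) consisting of all permutations π with π(i) = i for every i < n. Then Σ_{π ∈ P} (F n (σ^h * π) − F (n−1) (σ^h * π)) = n!. -/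
/-!
Let `L = {i | i < n}`, so that `g = σ ^ h` fixes every point outside `L` and each `π ∈ P` fixes
`L` pointwise. A set is `g * π`-invariant exactly when its part inside `L` is `g`-invariant and
its part outside `L` is `π`-invariant. Double counting pairs (π, s) shows that, for every
`j ≤ n`, the number of `π`-invariant `j`-subsets of the complement of `L`, summed over `π ∈ P`,
is `C(n, j) · j! (n - j)! = n!`. Hence `∑_{π ∈ P} F k (g * π) = n! · #{s ⊆ L | g s = s, #s ≤ k}`,
and in the difference of the cases `k = n` and `k = n - 1` only `s = L` survives.
-/

open Finset Nat

namespace Equiv.Perm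

variable {α : Type*} (τ : Perm α)

theorem apply_iff_of_forall_eq_self {q : α → Prop} (h : ∀ x, q x → τ x = x) {x : α} :
    q (τ x) ↔ q x :=
  ⟨fun hx => by rwa [← τ.injective (h _ hx)], fun hx => by rwa [h x hx]⟩

variable [DecidableEq α]

theorem image_finset_eq_self_iff (s : Finset α) : s.image τ = s ↔ ∀ x ∈ s, τ x ∈ s :=
  ⟨fun h _ hx => h ▸ mem_image_of_mem τ hx, fun h =>
    eq_of_subset_of_card_le (image_subset_iff.2 h) (card_image_of_injective s τ.injective).ge⟩

theorem apply_mem_iff_of_image_finset_eq_self {s : Finset α} (h : s.image τ = s) {x : α} :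
    τ x ∈ s ↔ x ∈ s := by
  conv_lhs => rw [← h]
  exact τ.injective.mem_finset_image

end Equiv.Perm

open Equiv

section

variable {α : Type*} [DecidableEq α]

def invariantSubsets (τ : Perm α) (t : Finset α) : Finset (Finset α) :=
  {s ∈ t.powerset | s.image τ = s}

variable {p : α → Prop} [DecidablePred p]

theorem image_mul_eq_self_iff {g π : Perm α} (hg : ∀ x, ¬ p x → g x = x)
    (hπ : ∀ x, p x → π x = x) (s : Finset α) :
    s.image (g * π) = s ↔ {x ∈ s | p x}.image g = {x ∈ s | p x} ∧
      {x ∈ s | ¬ p x}.image π = {x ∈ s | ¬ p x} := by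
  have hgp {x : α} (hx : p x) : p (g x) := not_iff_not.1 (g.apply_iff_of_forall_eq_self hg) |>.2 hx
  have hπp {x : α} (hx : ¬ p x) : ¬ p (π x) := mt (π.apply_iff_of_forall_eq_self hπ).1 hx
  simp only [Perm.image_finset_eq_self_iff, mem_filter, Perm.mul_apply]
  constructor
  · intro h
    refine ⟨fun x ⟨hs, hx⟩ => ⟨?_, hgp hx⟩, fun x ⟨hs, hx⟩ => ⟨?_, hπp hx⟩⟩
    · simpa [hπ x hx] using h x hs
    · simpa [hg _ (hπp hx)] using h x hs
  · rintro ⟨h₁, h₂⟩ x hs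
    by_cases hx : p x
    · simpa [hπ x hx] using (h₁ x ⟨hs, hx⟩).1
    · simpa [hg _ (hπp hx)] using (h₂ x ⟨hs, hx⟩).1

variable [Fintype α]

theorem card_invariant_mul_eq_sum {g π : Perm α} (hg : ∀ x, ¬ p x → g x = x)
    (hπ : ∀ x, p x → π x = x) (k : ℕ) :
    #{s | #s = k ∧ s.image (g * π) = s} = ∑ s₁ ∈ invariantSubsets g {x | p x},
      #{s₂ ∈ invariantSubsets π {x | ¬ p x} | #s₁ + #s₂ = k} := by
  have split_union {s t : Finset α} (hs : ∀ x ∈ s, p x) (ht : ∀ x ∈ t, ¬ p x) :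
      {x ∈ s ∪ t | p x} = s ∧ {x ∈ s ∪ t | ¬ p x} = t := by
    rw [filter_union, filter_union, filter_true_of_mem hs, filter_false_of_mem ht,
      filter_false_of_mem fun x hx => not_not.2 (hs x hx), filter_true_of_mem ht]
    exact ⟨union_empty s, empty_union t⟩
  calc _ = #{q ∈ invariantSubsets g {x | p x} ×ˢ invariantSubsets π {x | ¬ p x} |
          #q.1 + #q.2 = k} := by
        refine card_nbij' (fun s => ({x ∈ s | p x}, {x ∈ s | ¬ p x})) (fun q => q.1 ∪ q.2)
          ?_ ?_ ?_ ?_ <;>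
        simp only [Set.MapsTo, Set.LeftInvOn, coe_filter, mem_filter, mem_univ, true_and,
          mem_product, invariantSubsets, mem_powerset, subset_iff, Set.mem_ofPred_eq, Prod.forall]
        · rintro s ⟨rfl, hs⟩
          obtain ⟨inv₁, inv₂⟩ := (image_mul_eq_self_iff hg hπ s).1 hs
          exact ⟨⟨⟨fun _ hx => hx.2, inv₁⟩, fun _ hx => hx.2, inv₂⟩,
            card_filter_add_card_filter_not p⟩
        · rintro s₁ s₂ ⟨⟨⟨hs₁, inv₁⟩, hs₂, inv₂⟩, rfl⟩
          obtain ⟨h₁, h₂⟩ := split_union hs₁ hs₂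
          rw [image_mul_eq_self_iff hg hπ, ← card_filter_add_card_filter_not p, h₁, h₂]
          exact ⟨rfl, inv₁, inv₂⟩
        · exact fun s _ => filter_union_filter_not_eq p s
        · rintro s₁ s₂ ⟨⟨⟨hs₁, -⟩, hs₂, -⟩, -⟩
          obtain ⟨h₁, h₂⟩ := split_union hs₁ hs₂
          exact Prod.ext h₁ h₂
    _ = _ := by simp only [card_filter, sum_product]

variable (p)

def permsFixing : Finset (Perm α) :=
  {π | ∀ x, p x → π x = x}

/-- The stabilizer is that of the colouring which is injective on `p` and has two further
colours, for `s` and for the rest of the complement of `p`. -/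
theorem card_permsFixing_stabilizer {s : Finset α} (hs : ∀ x ∈ s, ¬ p x) :
    #{π ∈ permsFixing p | s.image (π : Perm α) = s} = (#s)! * (#{x | ¬ p x} - #s)! := by
  let f : α → α ⊕ Bool := fun x => if p x then .inl x else .inr (x ∈ s)
  have f_eq_inl {x a : α} : f x = .inl a ↔ p x ∧ x = a := by
    by_cases hx : p x <;> simp [f, hx]
  have hf (π : Perm α) : f ∘ π = f ↔ (∀ x, p x → π x = x) ∧ s.image π = s := by
    constructor
    · intro h
      have hπ (x : α) : f (π x) = f x := congrFun h x
      have fix (x : α) (hx : p x) : π x = x :=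
        (f_eq_inl.1 ((hπ x).trans (f_eq_inl.2 ⟨hx, rfl⟩))).2
      refine ⟨fix, (π.image_finset_eq_self_iff s).2 fun x hx => ?_⟩
      have hpx : ¬ p (π x) := fun h => hs x hx ((π.apply_iff_of_forall_eq_self fix).1 h)
      simpa [f, hs x hx, hpx, hx] using hπ x
    · rintro ⟨fix, hinv⟩
      funext x
      by_cases hx : p x
      · simp [f, fix x hx]
      · have hpx : ¬ p (π x) := fun h => hx ((π.apply_iff_of_forall_eq_self fix).1 h)
        simp [f, hx, hpx, π.apply_mem_iff_of_image_finset_eq_self hinv]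
  have fiber_inl (a : α) : (Fintype.card {x // f x = .inl a})! = 1 := by
    refine Nat.factorial_eq_one.2 (Fintype.card_le_one_iff.2 fun x y => Subtype.ext ?_)
    rw [(f_eq_inl.1 x.2).2, (f_eq_inl.1 y.2).2]
  have fiber_true : Fintype.card {x // f x = .inr true} = #s := by
    rw [Fintype.card_subtype]
    congr 1
    ext x
    by_cases hx : p x
    · simpa [f, hx] using fun h => hs x h hx
    · simp [f, hx]
  have fiber_false : Fintype.card {x // f x = .inr false} = #{x | ¬ p x} - #s := by
    rw [Fintype.card_subtype, ← card_sdiff_of_subset (fun x hx => by simpa using hs x hx)]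
    congr 1
    ext x
    by_cases hx : p x <;> simp [f, hx]
  rw [permsFixing, filter_filter, ← Fintype.card_subtype,
    Fintype.card_congr (Equiv.subtypeEquivRight fun π => (hf π).symm),
    DomMulAct.stabilizer_card, Fintype.prod_sum_type, Fintype.prod_bool]
  simp only [fiber_inl, fiber_true, fiber_false, prod_const_one, one_mul]

variable {p}

theorem sum_permsFixing_card_invariantSubsets_compl {j : ℕ} (hj : j ≤ #{x | ¬ p x}) :
    ∑ π ∈ permsFixing p, #{s ∈ invariantSubsets π {x | ¬ p x} | #s = j} = (#{x | ¬ p x})! := by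
  calc _ = ∑ π ∈ permsFixing p, #{s ∈ powersetCard j {x | ¬ p x} | s.image π = s} := by
        refine sum_congr rfl fun π _ => congrArg card ?_
        ext s
        simp only [invariantSubsets, mem_filter, mem_powerset, mem_powersetCard]
        tauto
    _ = ∑ s ∈ powersetCard j {x | ¬ p x},
          #{π ∈ permsFixing p | s.image (π : Perm α) = s} :=
        sum_card_bipartiteAbove_eq_sum_card_bipartiteBelow _
    _ = ∑ s ∈ powersetCard j {x | ¬ p x}, j ! * (#{x | ¬ p x} - j)! := by
        refine sum_congr rfl fun s hs => ?_
        obtain ⟨hsub, rfl⟩ := mem_powersetCard.1 hs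
        exact card_permsFixing_stabilizer p fun x hx => (mem_filter.1 (hsub hx)).2
    _ = _ := by
      rw [sum_const, card_powersetCard, smul_eq_mul, ← mul_assoc,
        choose_mul_factorial_mul_factorial hj]

theorem sum_permsFixing_card_invariant_mul {g : Perm α} (hg : ∀ x, ¬ p x → g x = x) {k : ℕ}
    (hk : k ≤ #{x | ¬ p x}) :
    ∑ π ∈ permsFixing p, #{s | #s = k ∧ s.image (g * π) = s} =
      #{s ∈ invariantSubsets g {x | p x} | #s ≤ k} * (#{x | ¬ p x})! := by
  calc _ = ∑ π ∈ permsFixing p, ∑ s₁ ∈ invariantSubsets g {x | p x},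
          #{s₂ ∈ invariantSubsets π {x | ¬ p x} | #s₁ + #s₂ = k} :=
        sum_congr rfl fun π hπ => card_invariant_mul_eq_sum hg (mem_filter.1 hπ).2 k
    _ = ∑ s₁ ∈ invariantSubsets g {x | p x}, ∑ π ∈ permsFixing p,
          #{s₂ ∈ invariantSubsets π {x | ¬ p x} | #s₁ + #s₂ = k} := sum_comm
    _ = ∑ s₁ ∈ invariantSubsets g {x | p x}, if #s₁ ≤ k then (#{x | ¬ p x})! else 0 := by
        refine sum_congr rfl fun s₁ _ => ?_
        split_ifs with h
        · rw [← sum_permsFixing_card_invariantSubsets_compl (j := k - #s₁) (by omega)]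
          refine sum_congr rfl fun π _ => congrArg card (filter_congr fun s₂ _ => ?_)
          omega
        · refine sum_eq_zero fun π _ => card_eq_zero.2 (filter_false_of_mem fun s₂ _ => ?_)
          omega
    _ = _ := by rw [← sum_filter, sum_const, smul_eq_mul]

theorem sum_permsFixing_card_invariant_mul_sub {g : Perm α} (hg : ∀ x, ¬ p x → g x = x)
    (hpos : 0 < #{x | p x}) (hle : #{x | p x} ≤ #{x | ¬ p x}) :
    ∑ π ∈ permsFixing p, ((#{s | #s = #{x | p x} ∧ s.image (g * π) = s} : ℤ) -
      #{s | #s = #{x | p x} - 1 ∧ s.image (g * π) = s}) = (#{x | ¬ p x})! := by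
  set L : Finset α := {x | p x}
  set A := invariantSubsets g L
  have subset_of_mem {s : Finset α} (hs : s ∈ A) : s ⊆ L := mem_powerset.1 (mem_filter.1 hs).1
  have hmem : L ∈ A := by
    refine mem_filter.2 ⟨mem_powerset.2 subset_rfl, (g.image_finset_eq_self_iff _).2 ?_⟩
    simp only [L, mem_filter, mem_univ, true_and]
    exact fun x hx => not_iff_not.1 (g.apply_iff_of_forall_eq_self hg) |>.2 hx
  have hall : {s ∈ A | #s ≤ #L} = A :=
    filter_true_of_mem fun s hs => card_le_card (subset_of_mem hs)
  have herase : {s ∈ A | #s ≤ #L - 1} = A.erase L := by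
    ext s
    rw [mem_filter, mem_erase]
    constructor
    · rintro ⟨hs, hcard⟩
      exact ⟨by rintro rfl; omega, hs⟩
    · rintro ⟨hne, hs⟩
      have := card_lt_card (ssubset_of_subset_of_ne (subset_of_mem hs) hne)
      exact ⟨hs, by omega⟩
  rw [sum_sub_distrib, ← Nat.cast_sum, ← Nat.cast_sum, sum_permsFixing_card_invariant_mul hg hle,
    sum_permsFixing_card_invariant_mul hg (by omega), hall, herase, ← card_erase_add_one hmem]
  push_cast
  ring

end

theorem eq6_general (n h : ℕ) (hn : 2 ≤ n) (σ : Equiv.Perm (Fin (2 * n)))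
    (hσ : ∀ i : Fin (2 * n),
      ((σ i : ℕ) = if (i : ℕ) < n then ((i : ℕ) + 1) % n else (i : ℕ))) :
    ∑ π ∈ (Finset.univ : Finset (Equiv.Perm (Fin (2 * n)))).filter
        (fun π => ∀ i : Fin (2 * n), (i : ℕ) < n → π i = i),
      ((F n (σ ^ h * π) : ℤ) - (F (n - 1) (σ ^ h * π) : ℤ)) = (n.factorial : ℤ) := by
  have card_low : #{i : Fin (2 * n) | (i : ℕ) < n} = n := by
    rw [Fin.card_filter_val_lt]
    omega
  have card_high : #{i : Fin (2 * n) | ¬ (i : ℕ) < n} = n := by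
    have := card_filter_add_card_filter_not (s := univ) (fun i : Fin (2 * n) => (i : ℕ) < n)
    rw [Finset.card_univ, Fintype.card_fin] at this
    omega
  have fix_high (i : Fin (2 * n)) (hi : ¬ (i : ℕ) < n) : (σ ^ h) i = i :=
    Perm.pow_apply_eq_self_of_apply_eq_self (Fin.ext ((hσ i).trans (if_neg hi))) h
  have hsum := sum_permsFixing_card_invariant_mul_sub fix_high (by omega) (by omega)
  rw [card_low, card_high] at hsum
  convert hsum using 2
  -- the two filters differ only in their `Decidable` instance (`decidableForallFin` here)
  · unfold permsFixing
    congr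
  · rfl

/-- Equation (6): for each `h` with `1 < h < n` and `gcd(n,h) ≠ 1`,
`Σ_{λ⊢n} χ^{(n,n)}_{((n/d_h)^{d_h},λ)}|K_λ| = n!`, expressed as
`Σ_{π ∈ P} (F n (σ^h π) - F (n-1) (σ^h π)) = n!` where `P ≅ S_n` fixes all `i < n`. -/
theorem eq6 (n h : ℕ) (hn : 2 ≤ n) (hh1 : 1 < h) (hh2 : h < n)
    (hd : Nat.gcd n h ≠ 1) (σ : Equiv.Perm (Fin (2 * n)))
    (hσ : ∀ i : Fin (2 * n),
      ((σ i : ℕ) = if (i : ℕ) < n then ((i : ℕ) + 1) % n else (i : ℕ))) :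
    ∑ π ∈ (Finset.univ : Finset (Equiv.Perm (Fin (2 * n)))).filter
        (fun π => ∀ i : Fin (2 * n), (i : ℕ) < n → π i = i),
      ((F n (σ ^ h * π) : ℤ) - (F (n - 1) (σ ^ h * π) : ℤ)) = (n.factorial : ℤ) :=
  eq6_general n h hn σ hσ
end

section
/- (Murnaghan–Nakayama evaluation used in Proposition 3.3: χ^{(n,n)}_{(n,λ)} = χ^{(n)}_λ − χ^{(n-1,1)}_λ.) Let n ≥ 2. Let σ ∈ Equiv.Perm (Fin (2*n)) be the n-cycle with σ(i) = i+1 mod n for i < n and σ(i) = i for i ≥ n, and let π ∈ Equiv.Perm (Fin (2*n)) satisfy π(i) = i for every i < n. Then F n (σ*π) − F (n−1) (σ*π) = 2 − f(π), where f(π) is the number of indices i with n ≤ i < 2n and π(i) = i. -/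
open Finset Equiv

namespace Finset

variable {α : Type*} [DecidableEq α] {τ : Perm α} {s t : Finset α}

theorem image_perm_eq_iff : s.image τ = s ↔ ∀ a ∈ s, τ a ∈ s :=
  ⟨fun h _ ha => h ▸ mem_image_of_mem τ ha, fun h =>
    eq_of_subset_of_card_le (image_subset_iff.2 h) (card_image_of_injective s τ.injective).ge⟩

theorem pow_apply_mem_of_image_perm_eq (hs : s.image τ = s) {a : α} (ha : a ∈ s) (k : ℕ) :
    (τ ^ k) a ∈ s := by
  induction k with
  | zero => exact ha
  | succ k ih => rw [pow_succ', Perm.mul_apply]; exact image_perm_eq_iff.1 hs _ ih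

theorem image_perm_compl [Fintype α] (hs : s.image τ = s) : sᶜ.image τ = sᶜ := by
  rw [compl_eq_univ_sdiff, image_sdiff _ _ τ.injective, image_univ_equiv, hs]

/-- The missing point forms the invariant set `t \ s`. -/
theorem image_perm_eq_and_card_add_one_iff (ht : t.image τ = t) (hst : s ⊆ t) :
    s.image τ = s ∧ #s + 1 = #t ↔ ∃ x ∈ t, τ x = x ∧ t.erase x = s := by
  constructor
  · rintro ⟨hs, hcard⟩
    obtain ⟨x, hx⟩ := card_eq_one.1 (by rw [card_sdiff_of_subset hst]; omega : #(t \ s) = 1)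
    have hxts : x ∈ t \ s := hx ▸ mem_singleton_self x
    have hdiff : (t \ s).image τ = t \ s := by rw [image_sdiff _ _ τ.injective, ht, hs]
    rw [hx, image_singleton, singleton_inj] at hdiff
    refine ⟨x, (mem_sdiff.1 hxts).1, hdiff, ?_⟩
    rw [erase_eq, ← hx, sdiff_sdiff_eq_self hst]
  · rintro ⟨x, hxt, hx, rfl⟩
    exact ⟨by rw [erase_eq, image_sdiff _ _ τ.injective, ht, image_singleton, hx],
      card_erase_add_one hxt⟩

end Finset

section InvariantSets

variable {α : Type*} [Fintype α] [DecidableEq α]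

def invariantSets (τ : Perm α) (k : ℕ) : Finset (Finset α) :=
  {s | #s = k ∧ s.image τ = s}

theorem F_eq_card_invariantSets {m : ℕ} (k : ℕ) (τ : Perm (Fin m)) :
    F k τ = #(invariantSets τ k) :=
  rfl

variable {τ : Perm α} {A : Finset α}
  (hA : ∀ s : Finset α, s.image τ = s → Disjoint s A ∨ A ⊆ s)
  (hAτ : A.image τ = A) (hAc : #Aᶜ = #A)
include hA hAτ hAc

theorem invariantSets_card_eq_of_dichotomy : invariantSets τ #A = {A, Aᶜ} := by
  ext s
  simp only [invariantSets, mem_filter, mem_univ, true_and, mem_insert, mem_singleton]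
  constructor
  · rintro ⟨hcard, hs⟩
    rcases hA s hs with hdisj | hsub
    · exact .inr (eq_of_subset_of_card_le (subset_compl_iff_disjoint_right.2 hdisj)
        (by rw [hcard, hAc]))
    · exact .inl (eq_of_subset_of_card_le hsub hcard.le).symm
  · rintro (rfl | rfl)
    exacts [⟨rfl, hAτ⟩, ⟨hAc, image_perm_compl hAτ⟩]

theorem invariantSets_card_sub_one_of_dichotomy (hAne : A.Nonempty) :
    invariantSets τ (#A - 1) = {x ∈ Aᶜ | τ x = x}.image Aᶜ.erase := by
  have hApos := hAne.card_pos
  ext s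
  simp only [invariantSets, mem_filter, mem_univ, true_and, mem_image]
  constructor
  · rintro ⟨hcard, hs⟩
    have hdisj := (hA s hs).resolve_right fun hsub => by
      have := card_le_card hsub; omega
    have hsub := subset_compl_iff_disjoint_right.2 hdisj
    obtain ⟨x, hx, hfix, rfl⟩ :=
      (image_perm_eq_and_card_add_one_iff (image_perm_compl hAτ) hsub).1 ⟨hs, by omega⟩
    exact ⟨x, ⟨hx, hfix⟩, rfl⟩
  · rintro ⟨x, hx, rfl⟩
    obtain ⟨hs, hcard⟩ := (image_perm_eq_and_card_add_one_iff (image_perm_compl hAτ)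
      (erase_subset x Aᶜ)).2 ⟨x, hx.1, hx.2, rfl⟩
    exact ⟨by omega, hs⟩

theorem card_invariantSets_card_of_dichotomy (hAne : A.Nonempty) :
    #(invariantSets τ #A) = 2 := by
  have : Nonempty α := hAne.to_type
  rw [invariantSets_card_eq_of_dichotomy hA hAτ hAc, card_pair ne_compl_self]

theorem card_invariantSets_card_sub_one_of_dichotomy (hAne : A.Nonempty) :
    #(invariantSets τ (#A - 1)) = #{x ∈ Aᶜ | τ x = x} := by
  rw [invariantSets_card_sub_one_of_dichotomy hA hAτ hAc hAne,
    card_image_of_injOn ((erase_injOn _).mono (filter_subset _ _))]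

end InvariantSets

section CycleOnLowerBlock

def lowerBlock (m n : ℕ) : Finset (Fin m) :=
  {i | (i : ℕ) < n}

theorem card_lowerBlock_two_mul (n : ℕ) : #(lowerBlock (2 * n) n) = n := by
  rw [lowerBlock, Fin.card_filter_val_lt]; omega

theorem card_compl_lowerBlock_two_mul (n : ℕ) : #(lowerBlock (2 * n) n)ᶜ = n := by
  rw [card_compl, Fintype.card_fin, card_lowerBlock_two_mul]; omega

variable {m n : ℕ} {σ π : Perm (Fin m)}
  (hσ : ∀ i : Fin m, (σ i : ℕ) = if (i : ℕ) < n then ((i : ℕ) + 1) % n else (i : ℕ))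
  (hπ : ∀ i : Fin m, (i : ℕ) < n → π i = i)
include hσ hπ

theorem mul_apply_val_of_lt {i : Fin m} (hi : (i : ℕ) < n) :
    ((σ * π) i : ℕ) = ((i : ℕ) + 1) % n := by
  rw [Perm.mul_apply, hπ i hi, hσ i, if_pos hi]

theorem pow_mul_apply_val_of_lt {i : Fin m} (hi : (i : ℕ) < n) (k : ℕ) :
    (((σ * π) ^ k) i : ℕ) = ((i : ℕ) + k) % n := by
  induction k with
  | zero => exact (Nat.mod_eq_of_lt hi).symm
  | succ k ih =>
    rw [pow_succ', Perm.mul_apply, mul_apply_val_of_lt hσ hπ (ih ▸ Nat.mod_lt _ (by omega)), ih,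
      Nat.mod_add_mod, add_assoc]

theorem mul_apply_of_le {i : Fin m} (hi : n ≤ (i : ℕ)) : (σ * π) i = π i := by
  have hπi : n ≤ (π i : ℕ) := by
    by_contra! h
    rw [π.injective (hπ _ h)] at h
    omega
  rw [Perm.mul_apply]
  exact Fin.ext (by rw [hσ, if_neg (by omega)])

theorem image_mul_lowerBlock : (lowerBlock m n).image (σ * π) = lowerBlock m n := by
  simp only [image_perm_eq_iff, lowerBlock, mem_filter, mem_univ, true_and]
  intro i hi
  rw [mul_apply_val_of_lt hσ hπ hi]
  exact Nat.mod_lt _ (by omega)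

/-- Transitivity of the cycle: from `a` one reaches `b` after `b + n - a` steps. -/
theorem disjoint_or_lowerBlock_subset (s : Finset (Fin m)) (hs : s.image (σ * π) = s) :
    Disjoint s (lowerBlock m n) ∨ lowerBlock m n ⊆ s := by
  rw [or_iff_not_imp_left, not_disjoint_iff]
  rintro ⟨a, has, haA⟩ b hbA
  simp only [lowerBlock, mem_filter, mem_univ, true_and] at haA hbA
  have hb : (((σ * π) ^ ((b : ℕ) + n - a)) a : ℕ) = b := by
    rw [pow_mul_apply_val_of_lt hσ hπ haA, show (a : ℕ) + (b + n - a) = b + n by omega,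
      Nat.add_mod_right, Nat.mod_eq_of_lt hbA]
  exact Fin.ext hb ▸ pow_apply_mem_of_image_perm_eq hs has _

theorem filter_compl_lowerBlock_mul_apply_eq :
    {i ∈ (lowerBlock m n)ᶜ | (σ * π) i = i} =
      ({i | n ≤ (i : ℕ) ∧ π i = i} : Finset (Fin m)) := by
  ext i
  simp only [lowerBlock, mem_filter, mem_compl, mem_univ, true_and, not_lt]
  exact and_congr_right fun hi => by rw [mul_apply_of_le hσ hπ hi]

end CycleOnLowerBlock

/-- Murnaghan–Nakayama evaluation in Proposition 3.3:
`χ^{(n,n)}_{(n,λ)} = χ^{(n)}_λ - χ^{(n-1,1)}_λ`, expressed as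
`F n (σπ) - F (n-1) (σπ) = 2 - f(π)` where `f(π)` counts the fixed points of `π`
among the last `n` points. -/
theorem mn_eval_nn (n : ℕ) (hn : 2 ≤ n) (σ π : Equiv.Perm (Fin (2 * n)))
    (hσ : ∀ i : Fin (2 * n),
      ((σ i : ℕ) = if (i : ℕ) < n then ((i : ℕ) + 1) % n else (i : ℕ)))
    (hπ : ∀ i : Fin (2 * n), (i : ℕ) < n → π i = i) :
    (F n (σ * π) : ℤ) - (F (n - 1) (σ * π) : ℤ)
      = 2 - ((Finset.univ.filter
          (fun i : Fin (2 * n) => n ≤ (i : ℕ) ∧ π i = i)).card : ℤ) := by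
  have hA := disjoint_or_lowerBlock_subset hσ hπ
  have hAτ := image_mul_lowerBlock hσ hπ
  have hAne : (lowerBlock (2 * n) n).Nonempty :=
    card_pos.1 (by rw [card_lowerBlock_two_mul]; omega)
  have hAc : #(lowerBlock (2 * n) n)ᶜ = #(lowerBlock (2 * n) n) := by
    rw [card_lowerBlock_two_mul, card_compl_lowerBlock_two_mul]
  have hFn := card_invariantSets_card_of_dichotomy hA hAτ hAc hAne
  have hFn1 := card_invariantSets_card_sub_one_of_dichotomy hA hAτ hAc hAne
  rw [card_lowerBlock_two_mul] at hFn hFn1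
  rw [filter_compl_lowerBlock_mul_apply_eq hσ hπ] at hFn1
  rw [F_eq_card_invariantSets, F_eq_card_invariantSets, hFn, hFn1]
  norm_cast
end

section
/- (Murnaghan–Nakayama evaluation used in Theorem 3.5: χ^{(2n-k,k)}_{(n,λ)} = χ^{(n-k,k)}_λ for n ≥ 2k.) Let k ≥ 1 and n ≥ 2k. Let σ ∈ Equiv.Perm (Fin (2*n)) be the n-cycle with σ(i) = i+1 mod n for i < n and σ(i) = i for i ≥ n, and let π ∈ Equiv.Perm (Fin (2*n)) satisfy π(i) = i for every i < n. Then F k (σ*π) − F (k−1) (σ*π) = G k π − G (k−1) π, where for j ∈ ℕ, G j π denotes the number of j-element Finsets s ⊆ Fin (2*n) with s.image π = s and every element i of s satisfying n ≤ i. -/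
/-- `G n j π` is the number of `j`-element subsets of `Fin m` invariant under `π`
all of whose elements are `≥ n`. -/
def G {m : ℕ} (n j : ℕ) (π : Equiv.Perm (Fin m)) : ℕ :=
  ((Finset.univ : Finset (Finset (Fin m))).filter
    (fun s => s.card = j ∧ s.image π = s ∧ ∀ i : Fin m, i ∈ s → n ≤ (i : ℕ))).card

open Equiv

lemma Equiv.Perm.apply_not_of_forall_apply_eq {α : Type*} {π : Perm α} {p : α → Prop}
    (hπ : ∀ a, p a → π a = a) {x : α} (hx : ¬ p x) : ¬ p (π x) :=
  fun h => hx (π.injective (hπ _ h) ▸ h)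

lemma Finset.pow_apply_mem_of_image_eq {α : Type*} [DecidableEq α] {τ : Perm α} {s : Finset α}
    (hs : s.image τ = s) {x : α} (hx : x ∈ s) (t : ℕ) : (τ ^ t) x ∈ s := by
  have hmaps : Set.MapsTo τ s s := fun y hy => hs ▸ Finset.mem_image_of_mem τ hy
  exact hmaps.iterate t hx

section LowerRotation

variable {m n : ℕ} {σ π : Perm (Fin m)}

lemma mul_apply_eq_of_le
    (hσ : ∀ i : Fin m, (σ i : ℕ) = if (i : ℕ) < n then ((i : ℕ) + 1) % n else (i : ℕ))
    (hπ : ∀ i : Fin m, (i : ℕ) < n → π i = i) {x : Fin m} (hx : n ≤ (x : ℕ)) :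
    (σ * π) x = π x := by
  have hπx : ¬ ((π x : ℕ) < n) := Perm.apply_not_of_forall_apply_eq hπ (by omega)
  exact Fin.ext <| by rw [Perm.mul_apply, hσ, if_neg hπx]

lemma val_mul_pow_apply_of_lt
    (hσ : ∀ i : Fin m, (σ i : ℕ) = if (i : ℕ) < n then ((i : ℕ) + 1) % n else (i : ℕ))
    (hπ : ∀ i : Fin m, (i : ℕ) < n → π i = i) {i : Fin m} (hi : (i : ℕ) < n) (t : ℕ) :
    (((σ * π) ^ t) i : ℕ) = ((i : ℕ) + t) % n := by
  induction t with
  | zero => simp [Nat.mod_eq_of_lt hi]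
  | succ t ih =>
    have hlt : ((((σ * π) ^ t) i : Fin m) : ℕ) < n := ih ▸ Nat.mod_lt _ (by omega)
    rw [pow_succ', Perm.mul_apply, Perm.mul_apply, hπ _ hlt, hσ, if_pos hlt, ih,
      Nat.mod_add_mod, Nat.add_assoc]

lemma le_card_of_mem_of_lt
    (hσ : ∀ i : Fin m, (σ i : ℕ) = if (i : ℕ) < n then ((i : ℕ) + 1) % n else (i : ℕ))
    (hπ : ∀ i : Fin m, (i : ℕ) < n → π i = i) {s : Finset (Fin m)}
    (hs : s.image (σ * π) = s) {i : Fin m} (his : i ∈ s) (hi : (i : ℕ) < n) :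
    n ≤ s.card := by
  have hval (r : ℕ) (hr : r < n) : (((σ * π) ^ (n - i + r)) i : ℕ) = r := by
    rw [val_mul_pow_apply_of_lt hσ hπ hi, show (i : ℕ) + (n - i + r) = r + n by omega,
      Nat.add_mod_right, Nat.mod_eq_of_lt hr]
  have hinj : Set.InjOn (fun r => ((σ * π) ^ (n - i + r)) i) (Finset.range n : Set ℕ) :=
    fun r hr r' hr' h => by
      rw [Finset.coe_range, Set.mem_Iio] at hr hr'
      rw [← hval r hr, ← hval r' hr']
      exact congrArg Fin.val h
  simpa using Finset.card_le_card_of_injOn _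
    (fun r _ => Finset.pow_apply_mem_of_image_eq hs his _) hinj

lemma F_mul_eq_G
    (hσ : ∀ i : Fin m, (σ i : ℕ) = if (i : ℕ) < n then ((i : ℕ) + 1) % n else (i : ℕ))
    (hπ : ∀ i : Fin m, (i : ℕ) < n → π i = i) {j : ℕ} (hj : j < n) :
    F j (σ * π) = G n j π := by
  unfold F G
  congr 1
  refine Finset.filter_congr fun s _ => ?_
  have himage (hup : ∀ i ∈ s, n ≤ (i : ℕ)) : s.image (σ * π) = s.image π :=
    Finset.image_congr fun x hx => mul_apply_eq_of_le hσ hπ (hup x hx)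
  constructor
  · rintro ⟨hcard, hs⟩
    have hup : ∀ i ∈ s, n ≤ (i : ℕ) := fun i his => by
      by_contra hi
      have := le_card_of_mem_of_lt hσ hπ hs his (by omega)
      omega
    exact ⟨hcard, himage hup ▸ hs, hup⟩
  · rintro ⟨hcard, hs, hup⟩
    exact ⟨hcard, (himage hup).trans hs⟩

end LowerRotation

/-- Murnaghan–Nakayama evaluation in Theorem 3.5:
`χ^{(2n-k,k)}_{(n,λ)} = χ^{(n-k,k)}_λ` for `n ≥ 2k`, expressed as
`F k (σπ) - F (k-1) (σπ) = G k π - G (k-1) π`. -/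
theorem mn_eval_2nkk (n k : ℕ) (hk : 1 ≤ k) (hn : 2 * k ≤ n)
    (σ π : Equiv.Perm (Fin (2 * n)))
    (hσ : ∀ i : Fin (2 * n),
      ((σ i : ℕ) = if (i : ℕ) < n then ((i : ℕ) + 1) % n else (i : ℕ)))
    (hπ : ∀ i : Fin (2 * n), (i : ℕ) < n → π i = i) :
    (F k (σ * π) : ℤ) - (F (k - 1) (σ * π) : ℤ)
      = (G n k π : ℤ) - (G n (k - 1) π : ℤ) := by
  rw [F_mul_eq_G hσ hπ (by omega : k < n), F_mul_eq_G hσ hπ (by omega : k - 1 < n)]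
end
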